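/- arXiv:2401.08260 — 7 statements merged into one kernel-verified Lean document; each statement's English description precedes it below -/
import Mathlib

section
/- Let d ≥ 4 and let f : ℝ_{≥0} → ℝ be measurable and locally bounded, i.e., f restricted to [0,s] is essentially bounded for every s > 0. Then the function F : ℝ_{≥0} → ℝ defined by F(s) = (2 Γ(d/2) / (√π Γ((d-1)/2))) ∫₀¹ f(t s) (1 - t²)^{(d-3)/2} dt is differentiable at every point s ∈ (0, ∞). -/
/-!
Write `α = (d - 3) / 2 > 0`. Substituting `u = t s`, the transform is, up to its constant,
`s ^ (-(2α + 1)) * ∫₀ˢ f(u) (s² - u²)^α du`. Since `(s² - u²)^α = ∫ᵤˢ 2αr (r² - u²)^(α-1) dr`,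
Fubini turns the integral into `∫₀ˢ ψ` with `ψ(r) = 2αr ∫₀ʳ f(u) (r² - u²)^(α-1) du`, so by the
fundamental theorem of calculus it suffices that `ψ` is continuous. The kernels
`u ↦ (r² - u²)^(α-1)` on `(0, r)` are nonnegative, converge pointwise off `u = s` as `r → s`,
and have masses `c r^(2α-1)` converging as well; by Scheffé's lemma they converge in `L¹`, and
pairing with the locally bounded `f` gives the continuity of `ψ`.
-/

open MeasureTheory Set Filter Topology

section Scheffe

variable {X ι : Type*} [MeasurableSpace X] {μ : Measure X} {l : Filter ι} {g : ι → X → ℝ}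
  {g₀ : X → ℝ}

theorem tendsto_integral_abs_sub_of_tendsto_integral [l.IsCountablyGenerated]
    (hg : ∀ i x, 0 ≤ g i x) (hg₀ : ∀ x, 0 ≤ g₀ x) (hg_int : ∀ᶠ i in l, Integrable (g i) μ)
    (hg₀_int : Integrable g₀ μ) (h_lim : ∀ᵐ x ∂μ, Tendsto (fun i => g i x) l (𝓝 (g₀ x)))
    (h_int_lim : Tendsto (fun i => ∫ x, g i x ∂μ) l (𝓝 (∫ x, g₀ x ∂μ))) :
    Tendsto (fun i => ∫ x, |g i x - g₀ x| ∂μ) l (𝓝 0) := by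
  have h_min : Tendsto (fun i => ∫ x, min (g i x) (g₀ x) ∂μ) l (𝓝 (∫ x, g₀ x ∂μ)) := by
    refine tendsto_integral_filter_of_dominated_convergence g₀ ?_ ?_ hg₀_int ?_
    · filter_upwards [hg_int] with i hi
      exact hi.aestronglyMeasurable.inf hg₀_int.aestronglyMeasurable
    · refine Eventually.of_forall fun i => Eventually.of_forall fun x => ?_
      rw [Real.norm_of_nonneg (le_min (hg i x) (hg₀ x))]
      exact min_le_right _ _
    · filter_upwards [h_lim] with x hx
      simpa using hx.min (tendsto_const_nhds (x := g₀ x))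
  have h_eq : ∀ᶠ i in l, ∫ x, |g i x - g₀ x| ∂μ
      = ∫ x, g i x ∂μ + ∫ x, g₀ x ∂μ - 2 * ∫ x, min (g i x) (g₀ x) ∂μ := by
    filter_upwards [hg_int] with i hi
    have h_min_int : Integrable (fun x => min (g i x) (g₀ x)) μ := hi.inf hg₀_int
    rw [← integral_add hi hg₀_int, ← integral_const_mul, ← integral_sub (f := fun x => g i x + g₀ x)
      (hi.add hg₀_int) (h_min_int.const_mul 2)]
    congr 1 with x
    rcases le_total (g i x) (g₀ x) with h | h
    · rw [abs_of_nonpos (by linarith), min_eq_left h]; ring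
    · rw [abs_of_nonneg (by linarith), min_eq_right h]; ring
  have := (h_int_lim.add_const (∫ x, g₀ x ∂μ)).sub (h_min.const_mul 2)
  rw [show ∫ x, g₀ x ∂μ + ∫ x, g₀ x ∂μ - 2 * ∫ x, g₀ x ∂μ = 0 by ring] at this
  exact this.congr' (h_eq.mono fun i hi => hi.symm)

theorem tendsto_integral_mul_of_tendsto_integral_abs_sub {f : X → ℝ} {C : ℝ}
    (hf : AEStronglyMeasurable f μ) (hfC : ∀ᵐ x ∂μ, |f x| ≤ C)
    (hg_int : ∀ᶠ i in l, Integrable (g i) μ) (hg₀_int : Integrable g₀ μ)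
    (h : Tendsto (fun i => ∫ x, |g i x - g₀ x| ∂μ) l (𝓝 0)) :
    Tendsto (fun i => ∫ x, f x * g i x ∂μ) l (𝓝 (∫ x, f x * g₀ x ∂μ)) := by
  rw [tendsto_iff_norm_sub_tendsto_zero]
  refine squeeze_zero' (Eventually.of_forall fun i => norm_nonneg _) ?_
    (by simpa using h.const_mul C)
  filter_upwards [hg_int] with i hi
  have hfg : ∀ {g : X → ℝ}, Integrable g μ → Integrable (fun x => f x * g x) μ :=
    fun hg => hg.bdd_mul hf (by simpa using hfC)
  rw [← integral_sub (hfg hi) (hfg hg₀_int), ← integral_const_mul]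
  refine (norm_integral_le_integral_norm _).trans
    (integral_mono_ae ((hfg hi).sub (hfg hg₀_int)).norm ((hi.sub hg₀_int).abs.const_mul C) ?_)
  filter_upwards [hfC] with x hx
  rw [← mul_sub, norm_mul, Real.norm_eq_abs, Real.norm_eq_abs]
  exact mul_le_mul_of_nonneg_right hx (abs_nonneg _)

end Scheffe

namespace RiemannLiouville

lemma hasDerivAt_sq_sub_sq_rpow {u r α : ℝ} (h : u ^ 2 < r ^ 2) :
    HasDerivAt (fun r => (r ^ 2 - u ^ 2) ^ α) (2 * α * r * (r ^ 2 - u ^ 2) ^ (α - 1)) r := by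
  have := ((hasDerivAt_pow 2 r).sub_const (u ^ 2)).rpow_const (p := α) (Or.inl (by linarith))
  convert this using 1
  push_cast
  ring

lemma sq_sub_sq_rpow_nonneg {u r β : ℝ} (hu : 0 ≤ u) (hur : u ≤ r) : 0 ≤ (r ^ 2 - u ^ 2) ^ β :=
  Real.rpow_nonneg (by nlinarith) β

lemma sq_sub_sq_mul_rpow {x t β : ℝ} (hx : 0 ≤ x) (ht : t ^ 2 ≤ 1) :
    (x ^ 2 - (t * x) ^ 2) ^ β = x ^ (2 * β) * (1 - t ^ 2) ^ β := by
  rw [show x ^ 2 - (t * x) ^ 2 = x ^ 2 * (1 - t ^ 2) by ring,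
    Real.mul_rpow (sq_nonneg x) (by linarith), ← Real.rpow_natCast, ← Real.rpow_mul hx]
  norm_num

lemma continuous_sq_sub_sq_rpow {u α : ℝ} (hα : 0 < α) :
    Continuous fun r : ℝ => (r ^ 2 - u ^ 2) ^ α :=
  (by fun_prop : Continuous fun r : ℝ => r ^ 2 - u ^ 2).rpow_const fun _ => Or.inr hα.le

lemma integrableOn_mul_sq_sub_sq_rpow {u x α : ℝ} (hα : 0 < α) (hu : 0 ≤ u) :
    IntegrableOn (fun r => 2 * α * r * (r ^ 2 - u ^ 2) ^ (α - 1)) (Ioo u x) := by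
  refine (intervalIntegral.integrableOn_deriv_of_nonneg (g := fun r => (r ^ 2 - u ^ 2) ^ α)
    ?_ ?_ ?_).mono_set Ioo_subset_Ioc_self
  · exact (continuous_sq_sub_sq_rpow hα).continuousOn
  · exact fun r hr => hasDerivAt_sq_sub_sq_rpow (by nlinarith [hr.1])
  · exact fun r hr => mul_nonneg (by nlinarith [hr.1]) (sq_sub_sq_rpow_nonneg hu hr.1.le)

lemma integral_mul_sq_sub_sq_rpow {u x α : ℝ} (hα : 0 < α) (hu : 0 ≤ u) (hux : u ≤ x) :
    ∫ r in Ioo u x, 2 * α * r * (r ^ 2 - u ^ 2) ^ (α - 1) = (x ^ 2 - u ^ 2) ^ α := by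
  rw [← integral_Ioc_eq_integral_Ioo, ← intervalIntegral.integral_of_le hux,
    intervalIntegral.integral_eq_sub_of_hasDerivAt_of_le hux
      (continuous_sq_sub_sq_rpow hα).continuousOn
      (fun r hr => hasDerivAt_sq_sub_sq_rpow (by nlinarith [hr.1]))
      ((intervalIntegrable_iff_integrableOn_Ioo_of_le hux).2
        (integrableOn_mul_sq_sub_sq_rpow hα hu)),
    sub_self, Real.zero_rpow hα.ne', sub_zero]

lemma integral_Ioo_eq_mul_integral_comp_mul (g : ℝ → ℝ) {x : ℝ} (hx : 0 < x) :
    ∫ u in Ioo 0 x, g u = x * ∫ t in Ioo 0 1, g (t * x) := by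
  simp only [← integral_Ioc_eq_integral_Ioo, ← intervalIntegral.integral_of_le zero_le_one,
    ← intervalIntegral.integral_of_le hx.le, intervalIntegral.integral_comp_mul_right g hx.ne',
    zero_mul, one_mul, smul_eq_mul, mul_inv_cancel_left₀ hx.ne']

noncomputable def rlKernel (β r : ℝ) : ℝ → ℝ := (Ioo 0 r).indicator fun u => (r ^ 2 - u ^ 2) ^ β

lemma rlKernel_nonneg (β r u : ℝ) : 0 ≤ rlKernel β r u :=
  indicator_nonneg (fun _ hu => sq_sub_sq_rpow_nonneg hu.1.le hu.2.le) u

lemma integrable_rlKernel {β : ℝ} (hβ : -1 < β) (r : ℝ) : Integrable (rlKernel β r) := by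
  rw [rlKernel, integrable_indicator_iff measurableSet_Ioo]
  rcases le_or_gt r 0 with hr | hr
  · simp [Ioo_eq_empty_of_le hr]
  have hsub : IntegrableOn (fun u => (r - u) ^ β) (Ioo 0 r) := by
    have := ((intervalIntegral.intervalIntegrable_rpow' hβ (a := 0) (b := r)).comp_sub_left r).symm
    simp only [sub_zero, sub_self] at this
    exact (intervalIntegrable_iff_integrableOn_Ioo_of_le hr.le).1 this
  have hadd : ContinuousOn (fun u => (r + u) ^ β) (Icc 0 r) := fun u hu =>
    ((by fun_prop : Continuous fun u : ℝ => r + u).continuousAt.rpow_const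
      (Or.inl (add_pos_of_pos_of_nonneg hr hu.1).ne')).continuousWithinAt
  refine (hsub.mul_continuousOn_of_subset hadd measurableSet_Ioo isCompact_Icc
    Ioo_subset_Icc_self).congr_fun (fun u hu => ?_) measurableSet_Ioo
  dsimp only
  rw [← Real.mul_rpow (by linarith [hu.2]) (by linarith [hu.1])]
  ring_nf

lemma setIntegral_rlKernel (β : ℝ) {r b : ℝ} (hr : 0 < r) (hrb : r ≤ b) :
    ∫ u in Ioo 0 b, rlKernel β r u = r ^ (2 * β + 1) * ∫ t in Ioo 0 1, (1 - t ^ 2) ^ β := by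
  rw [rlKernel, setIntegral_indicator measurableSet_Ioo,
    inter_eq_right.2 (Ioo_subset_Ioo_right hrb), integral_Ioo_eq_mul_integral_comp_mul _ hr,
    ← integral_const_mul, ← integral_const_mul]
  refine setIntegral_congr_fun measurableSet_Ioo fun t ht => ?_
  rw [sq_sub_sq_mul_rpow hr.le (by nlinarith [ht.1, ht.2]), Real.rpow_add hr, Real.rpow_one]
  ring

lemma tendsto_rlKernel (β : ℝ) {s u : ℝ} (hus : u ≠ s) :
    Tendsto (fun r => rlKernel β r u) (𝓝 s) (𝓝 (rlKernel β s u)) := by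
  rcases le_or_gt u 0 with hu | hu
  · simp [rlKernel, indicator_of_notMem (fun h : u ∈ Ioo 0 _ => hu.not_gt h.1)]
  rcases hus.lt_or_gt with hus | hus
  · have hcont : ContinuousAt (fun r : ℝ => (r ^ 2 - u ^ 2) ^ β) s :=
      (by fun_prop : Continuous fun r : ℝ => r ^ 2 - u ^ 2).continuousAt.rpow_const
        (Or.inl (by nlinarith))
    rw [rlKernel, indicator_of_mem (show u ∈ Ioo 0 s from ⟨hu, hus⟩)]
    refine hcont.tendsto.congr' ?_
    filter_upwards [Ioi_mem_nhds hus] with r hr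
    rw [rlKernel, indicator_of_mem (show u ∈ Ioo 0 r from ⟨hu, hr⟩)]
  · refine tendsto_const_nhds.congr' ?_
    filter_upwards [Iio_mem_nhds hus] with r hr
    simp [rlKernel, indicator_of_notMem (fun h : u ∈ Ioo 0 r => hr.not_gt h.2),
      indicator_of_notMem (fun h : u ∈ Ioo 0 s => hus.not_gt h.2)]

noncomputable def rlDensity (α : ℝ) (f : ℝ → ℝ) (r : ℝ) : ℝ :=
  2 * α * r * ∫ u in Ioo 0 r, f u * (r ^ 2 - u ^ 2) ^ (α - 1)

lemma measurable_rlDensity {α : ℝ} {f : ℝ → ℝ} (hf : Measurable f) :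
    Measurable (rlDensity α f) := by
  have hF : StronglyMeasurable fun p : ℝ × ℝ =>
      {p : ℝ × ℝ | p.2 ∈ Ioo 0 p.1}.indicator (fun p => f p.2 * (p.1 ^ 2 - p.2 ^ 2) ^ (α - 1)) p :=
    ((by fun_prop : Measurable fun p : ℝ × ℝ => f p.2 * (p.1 ^ 2 - p.2 ^ 2) ^ (α - 1)).indicator
      ((measurableSet_lt measurable_const measurable_snd).inter
        (measurableSet_lt measurable_snd measurable_fst))).stronglyMeasurable
  refine measurable_const.mul measurable_id |>.mul ?_
  convert hF.integral_prod_right' (ν := volume).measurable using 2 with r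
  rw [← integral_indicator measurableSet_Ioo]
  rfl

noncomputable def rlIntegrand (α : ℝ) (f : ℝ → ℝ) (u r : ℝ) : ℝ :=
  if u < r then f u * (2 * α * r * (r ^ 2 - u ^ 2) ^ (α - 1)) else 0

section Fubini

variable {α x : ℝ} {f : ℝ → ℝ}

lemma rlIntegrand_eq_indicator_Ioi (u r : ℝ) : rlIntegrand α f u r =
    (Ioi u).indicator (fun r => f u * (2 * α * r * (r ^ 2 - u ^ 2) ^ (α - 1))) r := by
  simp [rlIntegrand, indicator_apply]

lemma rlIntegrand_eq_indicator_Iio (u r : ℝ) : rlIntegrand α f u r =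
    (Iio r).indicator (fun u => f u * (2 * α * r * (r ^ 2 - u ^ 2) ^ (α - 1))) u := by
  simp [rlIntegrand, indicator_apply]

lemma integrable_rlIntegrand_left (hα : 0 < α) {u : ℝ} (hu : 0 ≤ u) :
    Integrable (fun r => rlIntegrand α f u r) (volume.restrict (Ioo 0 x)) := by
  simp_rw [rlIntegrand_eq_indicator_Ioi]
  rw [integrable_indicator_iff measurableSet_Ioi, IntegrableOn,
    Measure.restrict_restrict measurableSet_Ioi, Ioi_inter_Ioo, max_eq_left hu]
  exact (integrableOn_mul_sq_sub_sq_rpow hα hu).const_mul (f u)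

lemma integral_rlIntegrand_left (hα : 0 < α) {u : ℝ} (hu : 0 ≤ u) (hux : u ≤ x) :
    ∫ r, rlIntegrand α f u r ∂(volume.restrict (Ioo 0 x)) = f u * (x ^ 2 - u ^ 2) ^ α := by
  simp_rw [rlIntegrand_eq_indicator_Ioi]
  rw [integral_indicator measurableSet_Ioi, Measure.restrict_restrict measurableSet_Ioi,
    Ioi_inter_Ioo, max_eq_left hu, integral_const_mul, integral_mul_sq_sub_sq_rpow hα hu hux]

lemma integral_rlIntegrand_right {r : ℝ} (hrx : r ≤ x) :
    ∫ u, rlIntegrand α f u r ∂(volume.restrict (Ioo 0 x)) = rlDensity α f r := by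
  simp_rw [rlIntegrand_eq_indicator_Iio]
  rw [integral_indicator measurableSet_Iio, Measure.restrict_restrict measurableSet_Iio,
    Iio_inter_Ioo, min_eq_left hrx, rlDensity, ← integral_const_mul]
  simp only [mul_left_comm]

lemma norm_rlIntegrand (hα : 0 < α) {u : ℝ} (hu : 0 ≤ u) (r : ℝ) :
    ‖rlIntegrand α f u r‖ = rlIntegrand α (fun u => |f u|) u r := by
  rw [rlIntegrand_eq_indicator_Ioi, rlIntegrand_eq_indicator_Ioi, norm_indicator_eq_indicator_norm]
  refine congrFun (indicator_congr fun r (hr : u < r) => ?_) r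
  rw [norm_mul, Real.norm_eq_abs, Real.norm_of_nonneg (mul_nonneg (by nlinarith)
    (sq_sub_sq_rpow_nonneg hu hr.le))]

lemma integrable_rlIntegrand (hα : 0 < α) (hf : Measurable f) {C : ℝ}
    (hC : ∀ᵐ u ∂(volume.restrict (Ioo 0 x)), |f u| ≤ C) :
    Integrable (Function.uncurry (rlIntegrand α f))
      ((volume.restrict (Ioo 0 x)).prod (volume.restrict (Ioo 0 x))) := by
  have hmem : ∀ᵐ u ∂(volume.restrict (Ioo 0 x)), u ∈ Ioo 0 x := ae_restrict_mem measurableSet_Ioo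
  have hP : Measurable (Function.uncurry (rlIntegrand α f)) :=
    Measurable.ite (measurableSet_lt measurable_fst measurable_snd) (by fun_prop) measurable_const
  refine (integrable_prod_iff hP.aestronglyMeasurable).2
    ⟨hmem.mono fun u hu => integrable_rlIntegrand_left (f := f) hα hu.1.le, ?_⟩
  have hbound : Integrable (fun u => |f u| * (x ^ 2 - u ^ 2) ^ α) (volume.restrict (Ioo 0 x)) :=
    (((by fun_prop : Continuous fun u : ℝ => x ^ 2 - u ^ 2).rpow_const
      fun _ => Or.inr hα.le).integrableOn_Icc.mono_set Ioo_subset_Icc_self).bdd_mul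
      hf.abs.aestronglyMeasurable (c := C) (by simpa using hC)
  refine hbound.congr ?_
  filter_upwards [hmem] with u hu
  simp only [Function.uncurry_apply_pair, norm_rlIntegrand hα hu.1.le]
  exact (integral_rlIntegrand_left (f := fun u => |f u|) hα hu.1.le hu.2.le).symm

lemma integrableOn_rlDensity (hα : 0 < α) (hf : Measurable f) {C : ℝ}
    (hC : ∀ᵐ u ∂(volume.restrict (Ioo 0 x)), |f u| ≤ C) :
    IntegrableOn (rlDensity α f) (Ioo 0 x) := by
  refine (integrable_rlIntegrand hα hf hC).integral_prod_right.congr ?_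
  filter_upwards [ae_restrict_mem measurableSet_Ioo] with r hr
  exact integral_rlIntegrand_right hr.2.le

lemma integral_rlDensity (hα : 0 < α) (hf : Measurable f) {C : ℝ}
    (hC : ∀ᵐ u ∂(volume.restrict (Ioo 0 x)), |f u| ≤ C) :
    ∫ r in Ioo 0 x, rlDensity α f r = ∫ u in Ioo 0 x, f u * (x ^ 2 - u ^ 2) ^ α := by
  have hmem : ∀ᵐ u ∂(volume.restrict (Ioo 0 x)), u ∈ Ioo 0 x := ae_restrict_mem measurableSet_Ioo
  calc ∫ r in Ioo 0 x, rlDensity α f r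
      = ∫ r in Ioo 0 x, ∫ u in Ioo 0 x, rlIntegrand α f u r :=
        integral_congr_ae (hmem.mono fun r hr => (integral_rlIntegrand_right hr.2.le).symm)
    _ = ∫ u in Ioo 0 x, ∫ r in Ioo 0 x, rlIntegrand α f u r :=
        (integral_integral_swap (integrable_rlIntegrand hα hf hC)).symm
    _ = ∫ u in Ioo 0 x, f u * (x ^ 2 - u ^ 2) ^ α :=
        integral_congr_ae (hmem.mono fun u hu => integral_rlIntegrand_left hα hu.1.le hu.2.le)

end Fubini

section Continuity

variable {α b : ℝ} {f : ℝ → ℝ}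

lemma rlDensity_eq_setIntegral_rlKernel {r : ℝ} (hrb : r ≤ b) :
    rlDensity α f r = 2 * α * r * ∫ u in Ioo 0 b, f u * rlKernel (α - 1) r u := by
  simp_rw [rlKernel, ← indicator_mul_right]
  rw [setIntegral_indicator measurableSet_Ioo, inter_eq_right.2 (Ioo_subset_Ioo_right hrb),
    rlDensity]

lemma continuousAt_rlDensity (hα : 0 < α) (hf : Measurable f) {s C : ℝ} (hs : 0 < s)
    (hsb : s < b) (hC : ∀ᵐ u ∂(volume.restrict (Ioo 0 b)), |f u| ≤ C) :
    ContinuousAt (rlDensity α f) s := by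
  have hβ : -1 < α - 1 := by linarith
  have hnhds : Ioo 0 b ∈ 𝓝 s := Ioo_mem_nhds hs hsb
  have h_int : ∀ r, Integrable (rlKernel (α - 1) r) (volume.restrict (Ioo 0 b)) :=
    fun r => (integrable_rlKernel hβ r).restrict
  have h_mass : Tendsto (fun r => ∫ u in Ioo 0 b, rlKernel (α - 1) r u) (𝓝 s)
      (𝓝 (∫ u in Ioo 0 b, rlKernel (α - 1) s u)) := by
    rw [setIntegral_rlKernel _ hs hsb.le]
    refine ((Real.continuousAt_rpow_const s _ (Or.inl hs.ne')).tendsto.mul_const _).congr' ?_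
    filter_upwards [hnhds] with r hr
    rw [setIntegral_rlKernel _ hr.1 hr.2.le]
  have h_L1 := tendsto_integral_abs_sub_of_tendsto_integral (rlKernel_nonneg _)
    (rlKernel_nonneg _ s) (Eventually.of_forall h_int) (h_int s)
    (ae_restrict_of_ae ((volume.ae_ne s).mono fun u hu => tendsto_rlKernel _ hu)) h_mass
  have h_W := tendsto_integral_mul_of_tendsto_integral_abs_sub hf.aestronglyMeasurable hC
    (Eventually.of_forall h_int) (h_int s) h_L1
  have h_eq : (fun r => 2 * α * r * ∫ u in Ioo 0 b, f u * rlKernel (α - 1) r u) =ᶠ[𝓝 s]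
      rlDensity α f := by
    filter_upwards [hnhds] with r hr
    exact (rlDensity_eq_setIntegral_rlKernel hr.2.le).symm
  exact ((continuousAt_const.mul continuousAt_id).mul h_W).congr h_eq

end Continuity

lemma hasDerivAt_integral_rlDensity {α b s C : ℝ} {f : ℝ → ℝ} (hα : 0 < α) (hf : Measurable f)
    (hs : 0 < s) (hsb : s < b) (hC : ∀ᵐ u ∂(volume.restrict (Ioo 0 b)), |f u| ≤ C) :
    HasDerivAt (fun x => ∫ r in 0..x, rlDensity α f r) (rlDensity α f s) s := by
  have h_int : IntervalIntegrable (rlDensity α f) volume 0 s :=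
    (intervalIntegrable_iff_integrableOn_Ioo_of_le hs.le).2 (integrableOn_rlDensity hα hf
      (ae_restrict_of_ae_restrict_of_subset (Ioo_subset_Ioo_right hsb.le) hC))
  exact intervalIntegral.integral_hasDerivAt_right h_int
    (measurable_rlDensity hf).stronglyMeasurable.stronglyMeasurableAtFilter
    (continuousAt_rlDensity hα hf hs hsb hC)

lemma integral_comp_mul_eq_rpow_mul_integral_rlDensity {α x C : ℝ} {f : ℝ → ℝ} (hα : 0 < α)
    (hf : Measurable f) (hx : 0 < x) (hC : ∀ᵐ u ∂(volume.restrict (Ioo 0 x)), |f u| ≤ C) :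
    ∫ t in Ioo 0 1, f (t * x) * (1 - t ^ 2) ^ α
      = x ^ (-(2 * α + 1)) * ∫ r in 0..x, rlDensity α f r := by
  rw [intervalIntegral.integral_of_le hx.le, integral_Ioc_eq_integral_Ioo,
    integral_rlDensity hα hf hC, integral_Ioo_eq_mul_integral_comp_mul _ hx, ← mul_assoc,
    ← integral_const_mul]
  refine setIntegral_congr_fun measurableSet_Ioo fun t ht => ?_
  have hpow : x ^ (-(2 * α + 1)) * x * x ^ (2 * α) = 1 := by
    rw [Real.rpow_neg hx.le, Real.rpow_add hx, Real.rpow_one]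
    field_simp
  rw [sq_sub_sq_mul_rpow hx.le (by nlinarith [ht.1, ht.2])]
  linear_combination (-(f (t * x) * (1 - t ^ 2) ^ α)) * hpow

theorem differentiableAt_integral_comp_mul_one_sub_sq_rpow {α s : ℝ} {f : ℝ → ℝ} (hα : 0 < α)
    (hf : Measurable f)
    (hf_bdd : ∀ x, 0 < x → ∃ C, ∀ᵐ u ∂(volume.restrict (Ioo 0 x)), |f u| ≤ C) (hs : 0 < s) :
    DifferentiableAt ℝ (fun x => ∫ t in Ioo 0 1, f (t * x) * (1 - t ^ 2) ^ α) s := by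
  have h_eq : (fun x => ∫ t in Ioo 0 1, f (t * x) * (1 - t ^ 2) ^ α)
      =ᶠ[𝓝 s] fun x => x ^ (-(2 * α + 1)) * ∫ r in 0..x, rlDensity α f r := by
    filter_upwards [Ioi_mem_nhds hs] with x hx
    obtain ⟨C, hC⟩ := hf_bdd x hx
    exact integral_comp_mul_eq_rpow_mul_integral_rlDensity hα hf hx hC
  obtain ⟨C, hC⟩ := hf_bdd (s + 1) (by linarith)
  rw [h_eq.differentiableAt_iff]
  exact (Real.differentiableAt_rpow_const_of_ne _ hs.ne').mul
    (hasDerivAt_integral_rlDensity hα hf hs (lt_add_one s) hC).differentiableAt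

end RiemannLiouville

open RiemannLiouville in
/-- For `d ≥ 4` and measurable, locally essentially bounded `f : ℝ_{≥0} → ℝ`, the
generalized Riemann–Liouville transform
`F(s) = (2 Γ(d/2)/(√π Γ((d-1)/2))) ∫₀¹ f(ts)(1-t²)^{(d-3)/2} dt` is
differentiable at every `s ∈ (0, ∞)`. -/
theorem riemann_liouville_transform_differentiable (d : ℕ) (hd : 4 ≤ d) (f : ℝ → ℝ)
    (hf_meas : Measurable f)
    (hf_bdd : ∀ s : ℝ, 0 < s →
      ∃ C : ℝ, ∀ᵐ t ∂(volume.restrict (Set.Icc (0 : ℝ) s)), |f t| ≤ C) :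
    ∀ s : ℝ, 0 < s →
      DifferentiableAt ℝ
        (fun s : ℝ =>
          (2 * Real.Gamma ((d : ℝ) / 2) /
              (Real.sqrt Real.pi * Real.Gamma (((d : ℝ) - 1) / 2))) *
            ∫ t in Set.Ioo (0 : ℝ) 1, f (t * s) * (1 - t ^ 2) ^ (((d : ℝ) - 3) / 2)) s := by
  intro s hs
  have hα : 0 < ((d : ℝ) - 3) / 2 := by
    have : (4 : ℝ) ≤ d := by exact_mod_cast hd
    linarith
  have hf_bdd_Ioo : ∀ x, 0 < x → ∃ C, ∀ᵐ u ∂(volume.restrict (Ioo 0 x)), |f u| ≤ C :=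
    fun x hx => (hf_bdd x hx).imp fun _ hC =>
      ae_restrict_of_ae_restrict_of_subset Ioo_subset_Icc_self hC
  exact (differentiableAt_integral_comp_mul_one_sub_sq_rpow hα hf_meas hf_bdd_Ioo hs).const_mul _
end

section
/- Let d ≥ 2 and let (aₙ)_{n≥0} be real coefficients such that the power series F(x) = ∑_{n=0}^∞ aₙ xⁿ converges for every x ∈ ℝ_{≥0}. Define bₙ = (√π Γ((n+d)/2) / (Γ(d/2) Γ((n+1)/2))) aₙ. Then the power series f(x) = ∑_{n=0}^∞ bₙ xⁿ also converges for every x ∈ ℝ_{≥0}, and for all x, y ∈ ℝ^d one has ∫_{S^{d-1}} f(|⟨ξ, x - y⟩|) dU(ξ) = F(‖x - y‖), where U is the uniform (normalized rotation-invariant) probability measure on the unit sphere S^{d-1} ⊆ ℝ^d. -/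
open MeasureTheory Metric
open scoped RealInnerProductSpace

/-- The uniform (normalized rotation-invariant) probability measure on the unit sphere
`S^{d-1} ⊆ ℝ^d`, obtained by normalizing the surface measure. -/
noncomputable def uniformSphere (d : ℕ) :
    Measure (sphere (0 : EuclideanSpace ℝ (Fin d)) 1) :=
  ((volume : Measure (EuclideanSpace ℝ (Fin d))).toSphere Set.univ)⁻¹ •
    (volume : Measure (EuclideanSpace ℝ (Fin d))).toSphere

/-!
For a unit vector `u`, integrate `|⟪x, u⟫| ^ n * exp (-‖x‖ ^ 2)` over `ℝ^d` in two ways. In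
Cartesian coordinates whose first axis is `u` the integral factors into one-dimensional Gaussian
integrals and equals `Γ((n+1)/2) π^((d-1)/2)`; in polar coordinates it equals the `n`-th moment of
`|⟪ξ, u⟫|` for the surface measure times `Γ((n+d)/2)/2`. Dividing by the case `n = 0` shows that
`E_U |⟪ξ, u⟫|ⁿ = Γ((n+1)/2) Γ(d/2) / (√π Γ((n+d)/2)) = aₙ / bₙ`, so integrating `f(|⟪ξ, x - y⟫|)`
term by term gives `F(‖x - y‖)`; the interchange is justified by the summability of
`|aₙ| ‖x - y‖ⁿ`. Finally `bₙ / aₙ = O(dⁿ)`, since `Γ(s + 1) = s Γ(s)` makes it grow at most by the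
factor `(n + d)/(n + 1) ≤ d` from `n` to `n + 2`, so `f` converges everywhere along with `F`.
-/

open Real Set Module

theorem integral_Ioi_pow_mul_exp_neg_sq (n : ℕ) :
    ∫ x in Ioi (0 : ℝ), x ^ n * exp (-x ^ 2) = Gamma ((n + 1) / 2) / 2 := by
  rw [div_eq_mul_one_div, mul_comm,
    ← integral_rpow_mul_exp_neg_rpow two_pos (by linarith [n.cast_nonneg (α := ℝ)])]
  refine setIntegral_congr_fun measurableSet_Ioi fun x _ => ?_
  norm_cast

theorem integral_abs_pow_mul_exp_neg_sq (n : ℕ) :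
    ∫ t : ℝ, |t| ^ n * exp (-t ^ 2) = Gamma ((n + 1) / 2) := by
  have h := integral_comp_abs (f := fun x => x ^ n * exp (-x ^ 2))
  simp only [sq_abs] at h
  rw [h, integral_Ioi_pow_mul_exp_neg_sq]
  ring

theorem integral_exp_neg_sq : ∫ t : ℝ, exp (-t ^ 2) = √π := by
  simpa using integral_gaussian 1

theorem EuclideanSpace.integral_abs_pow_mul_exp_neg_norm_sq {ι : Type*} [Fintype ι]
    [DecidableEq ι] (i₀ : ι) (n : ℕ) :
    ∫ w : EuclideanSpace ℝ ι, |w i₀| ^ n * exp (-‖w‖ ^ 2)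
      = Gamma ((n + 1) / 2) * √π ^ (Fintype.card ι - 1) := by
  let g : ι → ℝ → ℝ := fun i t => (if i = i₀ then |t| ^ n else 1) * exp (-t ^ 2)
  have hg : ∀ w : EuclideanSpace ℝ ι, |w i₀| ^ n * exp (-‖w‖ ^ 2) = ∏ i, g i (w i) := by
    intro w
    rw [EuclideanSpace.real_norm_sq_eq, ← Finset.sum_neg_distrib, exp_sum,
      Finset.prod_mul_distrib, Finset.prod_ite_eq' Finset.univ i₀]
    simp
  have hg_int : ∀ i, ∫ t, g i t = if i = i₀ then Gamma ((n + 1) / 2) else √π := by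
    intro i
    split_ifs with h
    · simp only [g, if_pos h, integral_abs_pow_mul_exp_neg_sq]
    · simp only [g, if_neg h, one_mul, integral_exp_neg_sq]
  have hchange : ∫ w : EuclideanSpace ℝ ι, ∏ i, g i (w i) = ∫ y : ι → ℝ, ∏ i, g i (y i) :=
    ((PiLp.volume_preserving_toLp ι).integral_comp
      (MeasurableEquiv.toLp 2 (ι → ℝ)).measurableEmbedding _).symm
  simp_rw [hg]
  rw [hchange, integral_fintype_prod_volume_eq_prod]
  simp_rw [hg_int]
  rw [Finset.prod_ite, Finset.prod_const, Finset.prod_const]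
  simp [Finset.filter_eq', Finset.filter_ne', Finset.card_erase_of_mem]

theorem exists_norm_eq_one_and_eq_norm_smul {F : Type*} [NormedAddCommGroup F]
    [NormedSpace ℝ F] [Nontrivial F] (v : F) : ∃ u : F, ‖u‖ = 1 ∧ v = ‖v‖ • u := by
  rcases eq_or_ne v 0 with rfl | hv
  · obtain ⟨u, hu⟩ := exists_norm_eq F zero_le_one
    exact ⟨u, hu, by simp⟩
  · exact ⟨‖v‖⁻¹ • v, norm_smul_inv_norm hv, (smul_inv_smul₀ (norm_ne_zero_iff.2 hv) v).symm⟩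

theorem integral_comp_inv_norm_smul_mul_fun_norm_addHaar {F : Type*} [NormedAddCommGroup F]
    [NormedSpace ℝ F] [Nontrivial F] [FiniteDimensional ℝ F] [MeasurableSpace F] [BorelSpace F]
    (μ : Measure F) [μ.IsAddHaarMeasure] (g : F → ℝ) (f : ℝ → ℝ) :
    ∫ x, g (‖x‖⁻¹ • x) * f ‖x‖ ∂μ
      = (∫ ξ : sphere (0 : F) 1, g ξ ∂μ.toSphere)
        * ∫ r in Ioi (0 : ℝ), r ^ (finrank ℝ F - 1) * f r := by
  calc
    ∫ x, g (‖x‖⁻¹ • x) * f ‖x‖ ∂μ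
        = ∫ x : ({(0)}ᶜ : Set F), g (‖x.1‖⁻¹ • x.1) * f ‖x.1‖ ∂(μ.comap (↑)) := by
      rw [integral_subtype_comap (measurableSet_singleton _).compl
        (fun x => g (‖x‖⁻¹ • x) * f ‖x‖), restrict_compl_singleton]
    _ = ∫ p, g p.1 * f p.2 ∂μ.toSphere.prod (.volumeIoiPow (finrank ℝ F - 1)) := by
      simpa using μ.measurePreserving_homeomorphUnitSphereProd.integral_comp
        (Homeomorph.measurableEmbedding _) (fun p => g p.1 * f p.2)
    _ = _ := by
      rw [integral_prod_mul (fun ξ : sphere (0 : F) 1 => g ξ) (fun r : Ioi (0 : ℝ) => f r)]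
      congr 1
      simp only [Measure.volumeIoiPow, ENNReal.ofReal]
      rw [integral_withDensity_eq_integral_smul (measurable_subtype_coe.pow_const _).real_toNNReal,
        integral_subtype_comap measurableSet_Ioi
          fun r => Real.toNNReal (r ^ (finrank ℝ F - 1)) • f r]
      refine setIntegral_congr_fun measurableSet_Ioi fun r hr => ?_
      rw [NNReal.smul_def, Real.coe_toNNReal _ (pow_nonneg hr.out.le _), smul_eq_mul]

section InnerProductSpace

variable {E : Type*} [NormedAddCommGroup E] [InnerProductSpace ℝ E] [FiniteDimensional ℝ E]

theorem exists_orthonormalBasis_apply_eq {u : E} (hu : ‖u‖ = 1) :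
    ∃ (i₀ : Fin (finrank ℝ E)) (b : OrthonormalBasis (Fin (finrank ℝ E)) ℝ E), b i₀ = u := by
  have : Nontrivial E := nontrivial_of_ne u 0 (by rintro rfl; simp at hu)
  let i₀ : Fin (finrank ℝ E) := ⟨0, finrank_pos⟩
  have hu' : Orthonormal ℝ (({i₀} : Set _).domRestrict fun _ => u) := by
    rw [orthonormal_iff_ite]
    rintro ⟨i, rfl⟩ ⟨j, rfl⟩
    simp [Set.domRestrict, hu]
  obtain ⟨b, hb⟩ := hu'.exists_orthonormalBasis_extension_of_card_eq (by simp)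
  exact ⟨i₀, b, hb i₀ rfl⟩

variable [MeasurableSpace E] [BorelSpace E]

theorem integral_abs_inner_pow_mul_exp_neg_norm_sq {u : E} (hu : ‖u‖ = 1) (n : ℕ) :
    ∫ x : E, |⟪x, u⟫| ^ n * exp (-‖x‖ ^ 2)
      = Gamma ((n + 1) / 2) * √π ^ (finrank ℝ E - 1) := by
  obtain ⟨i₀, b, rfl⟩ := exists_orthonormalBasis_apply_eq hu
  have h : ∀ x : E, |⟪x, b i₀⟫| ^ n * exp (-‖x‖ ^ 2)
      = |b.repr x i₀| ^ n * exp (-‖b.repr x‖ ^ 2) := by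
    intro x
    rw [b.repr_apply_apply, real_inner_comm, LinearIsometryEquiv.norm_map]
  simp_rw [h]
  refine (b.measurePreserving_measurableEquiv.integral_comp'
    (fun w => |w i₀| ^ n * exp (-‖w‖ ^ 2))).trans ?_
  rw [EuclideanSpace.integral_abs_pow_mul_exp_neg_norm_sq, Fintype.card_fin]

theorem integral_abs_inner_pow_toSphere {u : E} (hu : ‖u‖ = 1) (n : ℕ) :
    ∫ ξ : sphere (0 : E) 1, |⟪(ξ : E), u⟫| ^ n ∂(volume : Measure E).toSphere
      = 2 * Gamma ((n + 1) / 2) * √π ^ (finrank ℝ E - 1) / Gamma ((n + finrank ℝ E) / 2) := by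
  have : Nontrivial E := nontrivial_of_ne u 0 (by rintro rfl; simp at hu)
  have hpolar := integral_comp_inv_norm_smul_mul_fun_norm_addHaar (volume : Measure E)
    (fun x => |⟪x, u⟫| ^ n) (fun r => r ^ n * exp (-r ^ 2))
  have hhom : ∀ x : E, |⟪‖x‖⁻¹ • x, u⟫| ^ n * (‖x‖ ^ n * exp (-‖x‖ ^ 2))
      = |⟪x, u⟫| ^ n * exp (-‖x‖ ^ 2) := by
    intro x
    rcases eq_or_ne x 0 with rfl | hx
    · simp only [inner_smul_left, inner_zero_left, norm_zero, mul_zero, abs_zero, ← mul_assoc,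
        ← mul_pow]
    · rw [real_inner_smul_left, abs_mul, abs_inv, abs_norm, mul_pow, inv_pow]
      field_simp
  have hradial : ∫ r in Ioi (0 : ℝ), r ^ (finrank ℝ E - 1) * (r ^ n * exp (-r ^ 2))
      = Gamma ((n + finrank ℝ E) / 2) / 2 := by
    simp_rw [← mul_assoc, ← pow_add]
    rw [integral_Ioi_pow_mul_exp_neg_sq]
    congr 3
    push_cast [Nat.cast_sub finrank_pos]
    ring
  simp only [hhom, hradial, integral_abs_inner_pow_mul_exp_neg_norm_sq hu] at hpolar
  have hd : (0 : ℝ) < finrank ℝ E := Nat.cast_pos.2 finrank_pos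
  have hΓ : 0 < Gamma ((n + finrank ℝ E) / 2) := Gamma_pos_of_pos (by positivity)
  field_simp
  linarith

end InnerProductSpace

/-- The ratio `bₙ / aₙ` of the theorem. -/
noncomputable def slicingCoeff (d n : ℕ) : ℝ :=
  √π * Gamma ((n + d) / 2) / (Gamma (d / 2) * Gamma ((n + 1) / 2))

section SlicingCoeff

variable {d : ℕ} [NeZero d]

theorem slicingCoeff_pos (n : ℕ) : 0 < slicingCoeff d n := by
  have hd : (0 : ℝ) < d := Nat.cast_pos.2 (Nat.pos_of_neZero d)
  have := sqrt_pos.2 pi_pos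
  have := Gamma_pos_of_pos (s := (n + d) / 2) (by positivity)
  have := Gamma_pos_of_pos (s := d / 2) (by positivity)
  have := Gamma_pos_of_pos (s := (n + 1) / 2) (by positivity)
  unfold slicingCoeff
  positivity

theorem slicingCoeff_add_two (n : ℕ) :
    slicingCoeff d (n + 2) = (n + d) / (n + 1) * slicingCoeff d n := by
  have hd : (0 : ℝ) < d := Nat.cast_pos.2 (Nat.pos_of_neZero d)
  have h₁ : ((n + 2 : ℕ) + d : ℝ) / 2 = (n + d) / 2 + 1 := by push_cast; ring
  have h₂ : ((n + 2 : ℕ) + 1 : ℝ) / 2 = (n + 1) / 2 + 1 := by push_cast; ring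
  have := Gamma_pos_of_pos (s := d / 2) (by positivity)
  have := Gamma_pos_of_pos (s := (n + 1) / 2) (by positivity)
  unfold slicingCoeff
  rw [h₁, h₂, Gamma_add_one (by positivity), Gamma_add_one (by positivity)]
  field_simp

theorem slicingCoeff_le_mul_pow (n : ℕ) :
    slicingCoeff d n ≤ max (slicingCoeff d 0) (slicingCoeff d 1) * d ^ n := by
  have hd : (1 : ℝ) ≤ d := Nat.one_le_cast.2 (Nat.pos_of_neZero d)
  set M := max (slicingCoeff d 0) (slicingCoeff d 1)
  have hM : 0 ≤ M := (slicingCoeff_pos 0).le.trans (le_max_left _ _)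
  induction n using Nat.twoStepInduction with
  | zero => simp [M]
  | one => exact (le_max_right _ _).trans (le_mul_of_one_le_right hM (by simpa using hd))
  | more n ih _ =>
    have hq : ((n : ℝ) + d) / (n + 1) ≤ d := by
      rw [div_le_iff₀ (by positivity)]
      nlinarith [n.cast_nonneg (α := ℝ)]
    calc slicingCoeff d (n + 2) = (n + d) / (n + 1) * slicingCoeff d n := slicingCoeff_add_two n
      _ ≤ d * (M * d ^ n) := mul_le_mul hq ih (slicingCoeff_pos n).le (by positivity)
      _ ≤ M * d ^ (n + 2) := by
        rw [mul_left_comm, pow_succ', pow_succ']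
        gcongr
        exact le_mul_of_one_le_left (by positivity) hd

theorem summable_slicingCoeff_mul_mul_pow {a : ℕ → ℝ} {x : ℝ} (hx : 0 ≤ x)
    (ha : Summable fun n => a n * (d * x) ^ n) :
    Summable fun n => slicingCoeff d n * a n * x ^ n := by
  set M := max (slicingCoeff d 0) (slicingCoeff d 1)
  have hdx : 0 ≤ (d : ℝ) * x := by positivity
  refine Summable.of_norm_bounded (ha.abs.mul_left M) fun n => ?_
  rw [Real.norm_eq_abs, abs_mul, abs_mul, abs_of_pos (slicingCoeff_pos n), abs_mul,
    abs_of_nonneg (pow_nonneg hx n), abs_pow, abs_of_nonneg hdx, mul_pow]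
  calc slicingCoeff d n * |a n| * x ^ n ≤ M * d ^ n * |a n| * x ^ n := by
        gcongr; exact slicingCoeff_le_mul_pow n
    _ = M * (|a n| * (d ^ n * x ^ n)) := by ring

end SlicingCoeff

theorem isProbabilityMeasure_uniformSphere (d : ℕ) [NeZero d] :
    IsProbabilityMeasure (uniformSphere d) := by
  constructor
  rw [uniformSphere, Measure.smul_apply, smul_eq_mul]
  exact ENNReal.inv_mul_cancel (Measure.measure_univ_ne_zero.2 (Measure.toSphere_ne_zero _))
    (measure_ne_top _ _)

theorem integral_uniformSphere {d : ℕ} (f : sphere (0 : EuclideanSpace ℝ (Fin d)) 1 → ℝ) :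
    ∫ ξ, f ξ ∂uniformSphere d
      = (∫ ξ, f ξ ∂(volume : Measure (EuclideanSpace ℝ (Fin d))).toSphere)
        / (volume : Measure (EuclideanSpace ℝ (Fin d))).toSphere.real univ := by
  rw [uniformSphere, integral_smul_measure, ENNReal.toReal_inv, smul_eq_mul, measureReal_def,
    inv_mul_eq_div]

theorem integral_abs_inner_pow_uniformSphere_of_norm_eq_one {d : ℕ}
    {u : EuclideanSpace ℝ (Fin d)} (hu : ‖u‖ = 1) (n : ℕ) :
    ∫ ξ, |⟪(ξ : EuclideanSpace ℝ (Fin d)), u⟫| ^ n ∂uniformSphere d = (slicingCoeff d n)⁻¹ := by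
  have hσ := integral_abs_inner_pow_toSphere hu 0
  simp only [pow_zero, integral_const, smul_eq_mul, mul_one] at hσ
  rw [integral_uniformSphere, hσ, integral_abs_inner_pow_toSphere hu, slicingCoeff,
    finrank_euclideanSpace_fin]
  have hd : (0 : ℝ) < d := by
    have : Nontrivial (EuclideanSpace ℝ (Fin d)) :=
      nontrivial_of_ne u 0 (by rintro rfl; simp at hu)
    simpa using finrank_pos (R := ℝ) (M := EuclideanSpace ℝ (Fin d))
  have := sqrt_pos.2 pi_pos
  have := Gamma_pos_of_pos (s := (n + d) / 2) (by positivity)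
  have := Gamma_pos_of_pos (s := d / 2) (by positivity)
  have := Gamma_pos_of_pos (s := (n + 1) / 2) (by positivity)
  simp only [CharP.cast_eq_zero, zero_add, Gamma_one_half_eq]
  field_simp

theorem integral_abs_inner_pow_uniformSphere {d : ℕ} [NeZero d]
    (v : EuclideanSpace ℝ (Fin d)) (n : ℕ) :
    ∫ ξ, |⟪(ξ : EuclideanSpace ℝ (Fin d)), v⟫| ^ n ∂uniformSphere d
      = (slicingCoeff d n)⁻¹ * ‖v‖ ^ n := by
  obtain ⟨u, hu, hv⟩ := exists_norm_eq_one_and_eq_norm_smul v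
  have h : ∀ ξ : EuclideanSpace ℝ (Fin d), |⟪ξ, v⟫| ^ n = ‖v‖ ^ n * |⟪ξ, u⟫| ^ n := by
    intro ξ
    rw [hv, real_inner_smul_right, abs_mul, abs_norm, mul_pow, norm_smul, norm_norm, hu, mul_one]
  simp_rw [h]
  rw [integral_const_mul, integral_abs_inner_pow_uniformSphere_of_norm_eq_one hu, mul_comm]

theorem integral_tsum_slicingCoeff_mul_mul_abs_inner_pow {d : ℕ} [NeZero d] {a : ℕ → ℝ}
    (v : EuclideanSpace ℝ (Fin d)) (ha : Summable fun n => a n * ‖v‖ ^ n) :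
    ∫ ξ, ∑' n, slicingCoeff d n * a n * |⟪(ξ : EuclideanSpace ℝ (Fin d)), v⟫| ^ n
        ∂uniformSphere d
      = ∑' n, a n * ‖v‖ ^ n := by
  have := isProbabilityMeasure_uniformSphere d
  have hterm : ∀ n, ∫ ξ, slicingCoeff d n * a n * |⟪(ξ : EuclideanSpace ℝ (Fin d)), v⟫| ^ n
      ∂uniformSphere d = a n * ‖v‖ ^ n := by
    intro n
    rw [integral_const_mul, integral_abs_inner_pow_uniformSphere]
    field_simp [(slicingCoeff_pos n).ne']
  have hint : ∀ n, Integrable (fun ξ : sphere (0 : EuclideanSpace ℝ (Fin d)) 1 =>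
      slicingCoeff d n * a n * |⟪(ξ : EuclideanSpace ℝ (Fin d)), v⟫| ^ n) (uniformSphere d) :=
    fun n => Continuous.integrable_of_hasCompactSupport (by fun_prop) (.of_compactSpace _)
  have hnorm : ∀ n, ∫ ξ, ‖slicingCoeff d n * a n * |⟪(ξ : EuclideanSpace ℝ (Fin d)), v⟫| ^ n‖
      ∂uniformSphere d = ‖a n * ‖v‖ ^ n‖ := by
    intro n
    simp only [norm_mul, norm_pow, Real.norm_eq_abs, abs_abs, abs_norm]
    rw [integral_const_mul, integral_abs_inner_pow_uniformSphere, abs_of_pos (slicingCoeff_pos n)]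
    field_simp [(slicingCoeff_pos n).ne']
  rw [← integral_tsum_of_summable_integral_norm hint (ha.norm.congr fun n => (hnorm n).symm)]
  exact tsum_congr hterm

/-- Every radial kernel `K(x,y) = F(‖x-y‖)` with globally convergent analytic basis
function `F(x) = ∑ aₙ xⁿ` is the sliced version of the one-dimensional radial kernel with
basis function `f(x) = ∑ bₙ xⁿ`, where `bₙ = (√π Γ((n+d)/2)/(Γ(d/2)Γ((n+1)/2))) aₙ`;
moreover the series for `f` converges for every `x ≥ 0`. -/
theorem radial_kernel_eq_sliced_of_analytic (d : ℕ) (hd : 2 ≤ d) (a : ℕ → ℝ)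
    (ha : ∀ x : ℝ, 0 ≤ x → Summable (fun n : ℕ => a n * x ^ n))
    (b : ℕ → ℝ)
    (hb : ∀ n : ℕ, b n =
      Real.sqrt Real.pi * Real.Gamma (((n : ℝ) + d) / 2) /
        (Real.Gamma ((d : ℝ) / 2) * Real.Gamma (((n : ℝ) + 1) / 2)) * a n) :
    (∀ x : ℝ, 0 ≤ x → Summable (fun n : ℕ => b n * x ^ n)) ∧
    ∀ x y : EuclideanSpace ℝ (Fin d),
      (∫ ξ : sphere (0 : EuclideanSpace ℝ (Fin d)) 1,
          (∑' n : ℕ, b n * |⟪(ξ : EuclideanSpace ℝ (Fin d)), x - y⟫| ^ n)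
          ∂(uniformSphere d))
        = ∑' n : ℕ, a n * ‖x - y‖ ^ n := by
  have : NeZero d := ⟨by omega⟩
  obtain rfl : b = fun n => slicingCoeff d n * a n := funext hb
  exact ⟨fun x hx => summable_slicingCoeff_mul_mul_pow hx (ha _ (by positivity)),
    fun x y => integral_tsum_slicingCoeff_mul_mul_abs_inner_pow (x - y) (ha _ (norm_nonneg _))⟩
end

section
/- Let F : ℝ_{≥0} → ℝ be continuously differentiable and define f : ℝ_{≥0} → ℝ by f(t) = F(t) + t F'(t). Then for d = 3 and all x, y ∈ ℝ³ one has ∫_{S²} f(|⟨ξ, x - y⟩|) dU(ξ) = F(‖x - y‖), where U is the uniform (normalized rotation-invariant) probability measure on the unit sphere S² ⊆ ℝ³. -/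
/-!
Archimedes' hat-box theorem: for a unit vector `u`, the image of `U` under `ξ ↦ ⟪ξ, u⟫` is the
uniform distribution on `[-1, 1]`. To see it, integrate `x ↦ g (⟪x, u⟫ / ‖x‖) * exp (-‖x‖ ^ 2)`
over `ℝ³` twice: in polar coordinates `x = s • ξ` it is the sphere integral of `g ⟪ξ, u⟫` times
`∫₀^∞ s² e^{-s²} ds`; in cylindrical coordinates around `u`, followed by polar coordinates in the
(axial, radial) plane, it is `2π` times the same integral times `∫_{-1}^{1} g`.
With `g = f ∘ |·|` and `r = ‖x - y‖`, the sliced integral becomes `∫₀¹ f (r t) dt`, and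
`t ↦ t F (r t)` is an antiderivative of `t ↦ f (r t)`.
-/

open MeasureTheory Metric
open scoped RealInnerProductSpace

open Real Set

local notation "ℝ³" => EuclideanSpace ℝ (Fin 3)

section Spherical

variable {E : Type*} [NormedAddCommGroup E] [NormedSpace ℝ E] [Nontrivial E]

theorem exists_norm_eq_one_and_eq_norm_smul_s5 (v : E) : ∃ u : E, ‖u‖ = 1 ∧ v = ‖v‖ • u := by
  rcases eq_or_ne v 0 with rfl | hv
  · obtain ⟨u, hu⟩ := exists_norm_eq E zero_le_one
    exact ⟨u, hu, by simp⟩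
  · exact ⟨‖v‖⁻¹ • v, by simp [norm_smul, hv], by simp [smul_smul, hv]⟩

variable [FiniteDimensional ℝ E] [MeasurableSpace E] [BorelSpace E]

theorem integral_angular_mul_radial (μ : Measure E) [μ.IsAddHaarMeasure] (φ : E → ℝ)
    (w : ℝ → ℝ) :
    ∫ x, φ (‖x‖⁻¹ • x) * w ‖x‖ ∂μ =
      (∫ ξ, φ ξ ∂μ.toSphere) * ∫ s in Ioi 0, s ^ (Module.finrank ℝ E - 1) * w s := by
  set G : sphere (0 : E) 1 × Ioi (0 : ℝ) → ℝ := fun p => φ p.1 * w p.2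
  calc ∫ x, φ (‖x‖⁻¹ • x) * w ‖x‖ ∂μ
      = ∫ x : ({0}ᶜ : Set E), φ (‖(x : E)‖⁻¹ • x) * w ‖(x : E)‖ ∂(μ.comap Subtype.val) := by
        rw [integral_subtype_comap (measurableSet_singleton 0).compl
          (fun x => φ (‖x‖⁻¹ • x) * w ‖x‖), restrict_compl_singleton]
    _ = ∫ x : ({0}ᶜ : Set E), G (homeomorphUnitSphereProd E x) ∂(μ.comap Subtype.val) := by
        simp [G]
    _ = ∫ p, G p ∂(μ.toSphere.prod (Measure.volumeIoiPow (Module.finrank ℝ E - 1))) :=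
        μ.measurePreserving_homeomorphUnitSphereProd.integral_comp
          (Homeomorph.measurableEmbedding _) G
    _ = _ := by
        rw [integral_prod_mul (fun ξ : sphere (0 : E) 1 => φ ξ) fun s : Ioi (0 : ℝ) => w s]
        congr 1
        simp only [Measure.volumeIoiPow, ENNReal.ofReal]
        rw [integral_withDensity_eq_integral_smul
            (measurable_subtype_coe.pow_const _).real_toNNReal,
          integral_subtype_comap measurableSet_Ioi fun s => (s ^ _).toNNReal • w s]
        refine setIntegral_congr_fun measurableSet_Ioi fun s hs => ?_
        rw [NNReal.smul_def, Real.coe_toNNReal _ (pow_nonneg (le_of_lt hs) _), smul_eq_mul]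

end Spherical

theorem integral_symm_comp_abs {h : ℝ → ℝ} (hh : ContinuousOn h (Ici 0)) {a : ℝ} (ha : 0 ≤ a) :
    ∫ t in -a..a, h |t| = 2 * ∫ t in 0..a, h t := by
  have hcont : Continuous fun t => h |t| := hh.comp_continuous continuous_abs abs_nonneg
  have hpos : ∫ t in 0..a, h |t| = ∫ t in 0..a, h t :=
    intervalIntegral.integral_congr fun t ht => by
      rw [uIcc_of_le ha] at ht
      rw [abs_of_nonneg ht.1]
  have hneg : ∫ t in -a..0, h |t| = ∫ t in 0..a, h |t| := by
    simpa using (intervalIntegral.integral_comp_neg (a := 0) (b := a) fun t => h |t|).symm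
  rw [← intervalIntegral.integral_add_adjacent_intervals (hcont.intervalIntegrable _ 0)
    (hcont.intervalIntegrable 0 _), hneg, hpos, two_mul]

theorem integral_sin_mul_comp_cos {g : ℝ → ℝ} (hg : Continuous g) :
    ∫ θ in 0..π, sin θ * g (cos θ) = ∫ u in -1..1, g u := by
  have hsub := intervalIntegral.integral_comp_mul_deriv (a := 0) (b := π) (g := g)
    (fun θ _ => hasDerivAt_cos θ) continuous_sin.neg.continuousOn hg
  rw [cos_zero, cos_pi, intervalIntegral.integral_symm (-1) 1] at hsub
  simp only [Function.comp_apply, mul_neg, intervalIntegral.integral_neg, neg_inj] at hsub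
  simpa only [mul_comm] using hsub

theorem integral_abs_sin_mul_comp_cos {g : ℝ → ℝ} (hg : Continuous g) :
    ∫ θ in -π..π, |sin θ| * g (cos θ) = 2 * ∫ u in -1..1, g u := by
  have hfold : ∀ θ ∈ uIcc (-π) π, |sin θ| * g (cos θ) = sin |θ| * g (cos |θ|) := by
    intro θ hθ
    rw [uIcc_of_le (by linarith [pi_pos])] at hθ
    rcases le_total 0 θ with h | h
    · rw [abs_of_nonneg h, abs_of_nonneg (sin_nonneg_of_nonneg_of_le_pi h hθ.2)]
    · rw [abs_of_nonpos h, abs_of_nonpos (sin_nonpos_of_nonpos_of_neg_pi_le h hθ.1), sin_neg,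
        cos_neg]
  rw [intervalIntegral.integral_congr hfold,
    integral_symm_comp_abs (h := fun θ => sin θ * g (cos θ)) (by fun_prop) pi_pos.le,
    integral_sin_mul_comp_cos hg]

theorem integral_comp_sq_add_sq (k : ℝ → ℝ) :
    ∫ z : ℝ × ℝ, k (z.1 ^ 2 + z.2 ^ 2) = π * ∫ s, |s| * k (s ^ 2) := by
  have hpolar : ∀ p : ℝ × ℝ, p.1 • k ((p.1 * cos p.2) ^ 2 + (p.1 * sin p.2) ^ 2) =
      p.1 * k (p.1 ^ 2) * 1 := fun p => by
    rw [show (p.1 * cos p.2) ^ 2 + (p.1 * sin p.2) ^ 2 = p.1 ^ 2 by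
      linear_combination p.1 ^ 2 * cos_sq_add_sin_sq p.2, smul_eq_mul, mul_one]
  rw [← integral_comp_polarCoord_symm, polarCoord_target, Measure.volume_eq_prod]
  simp only [polarCoord_symm_apply, hpolar]
  rw [setIntegral_prod_mul (fun s => s * k (s ^ 2)) (fun _ => (1 : ℝ))]
  have habs := integral_comp_abs (f := fun s => s * k (s ^ 2))
  simp only [sq_abs] at habs
  rw [habs]
  simp only [integral_const, measureReal_restrict_apply_univ, Real.volume_real_Ioo,
    smul_eq_mul, mul_one]
  rw [max_eq_left (by linarith [pi_pos])]
  ring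

theorem integral_abs_snd_mul_angular (g w : ℝ → ℝ) :
    ∫ q : ℝ × ℝ, |q.2| * (g (q.1 / √(q.1 ^ 2 + q.2 ^ 2)) * w (q.1 ^ 2 + q.2 ^ 2)) =
      (∫ s in Ioi 0, s ^ 2 * w (s ^ 2)) * ∫ θ in -π..π, |sin θ| * g (cos θ) := by
  have hpolar : ∀ p ∈ Ioi (0 : ℝ) ×ˢ Ioo (-π) π,
      p.1 • (|p.1 * sin p.2| * (g (p.1 * cos p.2 / √((p.1 * cos p.2) ^ 2 + (p.1 * sin p.2) ^ 2))
        * w ((p.1 * cos p.2) ^ 2 + (p.1 * sin p.2) ^ 2))) =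
      p.1 ^ 2 * w (p.1 ^ 2) * (|sin p.2| * g (cos p.2)) := by
    rintro ⟨ρ, θ⟩ ⟨hρ, -⟩
    have hρ : 0 < ρ := hρ
    rw [show (ρ * cos θ) ^ 2 + (ρ * sin θ) ^ 2 = ρ ^ 2 by
      linear_combination ρ ^ 2 * cos_sq_add_sin_sq θ, sqrt_sq hρ.le,
      mul_div_cancel_left₀ _ hρ.ne', abs_mul, abs_of_pos hρ, smul_eq_mul]
    ring
  rw [← integral_comp_polarCoord_symm, polarCoord_target]
  simp only [polarCoord_symm_apply]
  rw [setIntegral_congr_fun (measurableSet_Ioi.prod measurableSet_Ioo) hpolar,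
    Measure.volume_eq_prod, setIntegral_prod_mul (fun ρ => ρ ^ 2 * w (ρ ^ 2))
      (fun θ => |sin θ| * g (cos θ)), intervalIntegral.integral_of_le
      (by linarith [pi_pos]), integral_Ioc_eq_integral_Ioo]

theorem abs_div_sqrt_sq_add_le_one (t : ℝ) {q : ℝ} (hq : 0 ≤ q) : |t / √(t ^ 2 + q)| ≤ 1 := by
  rw [abs_div, abs_of_nonneg (sqrt_nonneg _)]
  exact div_le_one_of_le₀ (abs_le_sqrt (by linarith)) (sqrt_nonneg _)

theorem exists_abs_comp_div_sqrt_le {g : ℝ → ℝ} (hg : Continuous g) :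
    ∃ M, ∀ t q : ℝ, 0 ≤ q → |g (t / √(t ^ 2 + q))| ≤ M := by
  obtain ⟨M, hM⟩ := isCompact_Icc.exists_bound_of_continuousOn (hg.continuousOn (s := Icc (-1) 1))
  exact ⟨M, fun t q hq => hM _ (abs_le.mp (abs_div_sqrt_sq_add_le_one t hq))⟩

theorem integrable_exp_neg_sq : Integrable fun x : ℝ => exp (-x ^ 2) := by
  simpa using integrable_exp_neg_mul_sq one_pos

theorem integrable_angular_mul_gaussian_three {g : ℝ → ℝ} (hg : Continuous g) :
    Integrable fun p : ℝ × ℝ × ℝ => g (p.1 / √(p.1 ^ 2 + (p.2.1 ^ 2 + p.2.2 ^ 2))) *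
      exp (-(p.1 ^ 2 + (p.2.1 ^ 2 + p.2.2 ^ 2))) := by
  obtain ⟨M, hM⟩ := exists_abs_comp_div_sqrt_le hg
  have hdom : Integrable fun p : ℝ × ℝ × ℝ =>
      M * (exp (-p.1 ^ 2) * (exp (-p.2.1 ^ 2) * exp (-p.2.2 ^ 2))) := by
    rw [Measure.volume_eq_prod, Measure.volume_eq_prod]
    exact (integrable_exp_neg_sq.mul_prod (integrable_exp_neg_sq.mul_prod
      integrable_exp_neg_sq)).const_mul M
  have hgm := hg.measurable
  refine hdom.mono' (Measurable.aestronglyMeasurable (by fun_prop)) (.of_forall fun p => ?_)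
  rw [norm_mul, norm_of_nonneg (exp_pos _).le, neg_add, neg_add, exp_add, exp_add]
  exact mul_le_mul_of_nonneg_right (hM _ _ (by positivity)) (by positivity)

theorem integrable_abs_snd_mul_angular_mul_gaussian {g : ℝ → ℝ} (hg : Continuous g) :
    Integrable fun q : ℝ × ℝ =>
      |q.2| * (g (q.1 / √(q.1 ^ 2 + q.2 ^ 2)) * exp (-(q.1 ^ 2 + q.2 ^ 2))) := by
  obtain ⟨M, hM⟩ := exists_abs_comp_div_sqrt_le hg
  have hdom : Integrable fun q : ℝ × ℝ => M * (exp (-q.1 ^ 2) * (|q.2| * exp (-q.2 ^ 2))) := by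
    have habs : Integrable fun s : ℝ => |s| * exp (-s ^ 2) := by
      simpa [abs_mul] using (integrable_mul_exp_neg_mul_sq one_pos).abs
    rw [Measure.volume_eq_prod]
    exact (integrable_exp_neg_sq.mul_prod habs).const_mul M
  have hgm := hg.measurable
  refine hdom.mono' (Measurable.aestronglyMeasurable (by fun_prop)) (.of_forall fun q => ?_)
  rw [norm_mul, norm_mul, norm_of_nonneg (exp_pos _).le, neg_add, exp_add, Real.norm_eq_abs,
    abs_abs]
  calc |q.2| * (‖g (q.1 / √(q.1 ^ 2 + q.2 ^ 2))‖ * (exp (-q.1 ^ 2) * exp (-q.2 ^ 2)))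
      = ‖g (q.1 / √(q.1 ^ 2 + q.2 ^ 2))‖ * (exp (-q.1 ^ 2) * (|q.2| * exp (-q.2 ^ 2))) := by ring
    _ ≤ _ := mul_le_mul_of_nonneg_right (hM _ _ (by positivity)) (by positivity)

theorem integral_angular_mul_gaussian_three {g : ℝ → ℝ} (hg : Continuous g) :
    ∫ p : ℝ × ℝ × ℝ, g (p.1 / √(p.1 ^ 2 + (p.2.1 ^ 2 + p.2.2 ^ 2))) *
        exp (-(p.1 ^ 2 + (p.2.1 ^ 2 + p.2.2 ^ 2))) =
      2 * π * (∫ s in Ioi 0, s ^ 2 * exp (-s ^ 2)) * ∫ u in -1..1, g u := by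
  have hint := integrable_abs_snd_mul_angular_mul_gaussian hg
  rw [Measure.volume_eq_prod] at hint
  rw [Measure.volume_eq_prod, integral_prod _ (Measure.volume_eq_prod ℝ (ℝ × ℝ) ▸
    integrable_angular_mul_gaussian_three hg)]
  calc ∫ t, ∫ z : ℝ × ℝ,
        g (t / √(t ^ 2 + (z.1 ^ 2 + z.2 ^ 2))) * exp (-(t ^ 2 + (z.1 ^ 2 + z.2 ^ 2)))
      = ∫ t, π * ∫ s, |s| * (g (t / √(t ^ 2 + s ^ 2)) * exp (-(t ^ 2 + s ^ 2))) :=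
        integral_congr_ae (.of_forall fun t =>
          integral_comp_sq_add_sq fun q => g (t / √(t ^ 2 + q)) * exp (-(t ^ 2 + q)))
    _ = π * ∫ q : ℝ × ℝ,
          |q.2| * (g (q.1 / √(q.1 ^ 2 + q.2 ^ 2)) * exp (-(q.1 ^ 2 + q.2 ^ 2))) := by
        rw [integral_const_mul, Measure.volume_eq_prod, integral_prod _ hint]
    _ = _ := by
        rw [integral_abs_snd_mul_angular g fun q => exp (-q), integral_abs_sin_mul_comp_cos hg]
        ring

theorem integral_sq_mul_exp_neg_sq_pos : 0 < ∫ s in Ioi 0, s ^ 2 * exp (-s ^ 2) := by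
  have h := integral_rpow_mul_exp_neg_rpow (p := 2) (q := 2) two_pos (by norm_num)
  simp only [rpow_two] at h
  rw [h]
  exact mul_pos (by norm_num) (Gamma_pos_of_pos (by norm_num))

def measurableEquivProdFinThree : ℝ³ ≃ᵐ ℝ × ℝ × ℝ :=
  (MeasurableEquiv.toLp 2 (Fin 3 → ℝ)).symm.trans
    ((MeasurableEquiv.piFinSuccAbove (fun _ => ℝ) 0).trans
      ((MeasurableEquiv.refl ℝ).prodCongr MeasurableEquiv.finTwoArrow))

theorem measurableEquivProdFinThree_apply (x : ℝ³) :
    measurableEquivProdFinThree x = (x 0, x 1, x 2) := rfl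

theorem measurePreserving_measurableEquivProdFinThree :
    MeasurePreserving measurableEquivProdFinThree := by
  have hsplit : MeasurePreserving ((MeasurableEquiv.refl ℝ).prodCongr MeasurableEquiv.finTwoArrow)
      (volume : Measure (ℝ × (Fin 2 → ℝ))) volume := by
    rw [Measure.volume_eq_prod, Measure.volume_eq_prod]
    exact (MeasurePreserving.id volume).prod (volume_preserving_finTwoArrow ℝ)
  exact hsplit.comp ((volume_preserving_piFinSuccAbove (fun _ => ℝ) 0).comp
    (EuclideanSpace.volume_preserving_symm_measurableEquiv_toLp (Fin 3)))

theorem EuclideanSpace.norm_fin_three (x : ℝ³) : ‖x‖ = √(x 0 ^ 2 + (x 1 ^ 2 + x 2 ^ 2)) := by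
  simp [EuclideanSpace.norm_eq, Fin.sum_univ_three, add_assoc]

theorem integral_comp_inner_norm_eq_integral_prod (Φ : ℝ → ℝ → ℝ) {u : ℝ³} (hu : ‖u‖ = 1) :
    ∫ x : ℝ³, Φ ⟪x, u⟫ ‖x‖ = ∫ p : ℝ × ℝ × ℝ, Φ p.1 √(p.1 ^ 2 + (p.2.1 ^ 2 + p.2.2 ^ 2)) := by
  set H : ℝ × ℝ × ℝ → ℝ := fun p => Φ p.1 √(p.1 ^ 2 + (p.2.1 ^ 2 + p.2.2 ^ 2))
  set e₀ : ℝ³ := EuclideanSpace.single 0 1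
  set e := (ℝ ∙ (u - e₀))ᗮ.reflection
  have he : e u = e₀ := Submodule.reflection_sub (by simp [e₀, hu])
  have hcoord : ∀ x, Φ ⟪x, u⟫ ‖x‖ = H (measurableEquivProdFinThree (e x)) := fun x => by
    simp only [H, measurableEquivProdFinThree_apply]
    rw [← EuclideanSpace.norm_fin_three, e.norm_map, ← e.inner_map_map, he,
      EuclideanSpace.inner_single_right]
    simp only [one_mul, conj_trivial]
  simp_rw [hcoord]
  rw [e.measurePreserving.integral_comp e.toHomeomorph.measurableEmbedding
      fun y => H (measurableEquivProdFinThree y),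
    measurePreserving_measurableEquivProdFinThree.integral_comp']

theorem integral_toSphere_comp_inner {g : ℝ → ℝ} (hg : Continuous g) {u : ℝ³} (hu : ‖u‖ = 1) :
    ∫ ξ, g ⟪(ξ : ℝ³), u⟫ ∂(volume : Measure ℝ³).toSphere = 2 * π * ∫ t in -1..1, g t := by
  set C := ∫ s in Ioi 0, s ^ 2 * exp (-s ^ 2)
  have hpolar := integral_angular_mul_radial (volume : Measure ℝ³) (fun ξ => g ⟪ξ, u⟫)
    fun s => exp (-s ^ 2)
  rw [finrank_euclideanSpace_fin] at hpolar
  have hcart : ∫ x : ℝ³, g ⟪‖x‖⁻¹ • x, u⟫ * exp (-‖x‖ ^ 2) = 2 * π * C * ∫ t in -1..1, g t := by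
    calc ∫ x : ℝ³, g ⟪‖x‖⁻¹ • x, u⟫ * exp (-‖x‖ ^ 2)
        = ∫ x : ℝ³, g (⟪x, u⟫ / ‖x‖) * exp (-‖x‖ ^ 2) := by
          simp_rw [real_inner_smul_left, inv_mul_eq_div]
      _ = ∫ p : ℝ × ℝ × ℝ, g (p.1 / √(p.1 ^ 2 + (p.2.1 ^ 2 + p.2.2 ^ 2))) *
            exp (-(p.1 ^ 2 + (p.2.1 ^ 2 + p.2.2 ^ 2))) := by
          rw [integral_comp_inner_norm_eq_integral_prod (fun a r => g (a / r) * exp (-r ^ 2)) hu]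
          congr with p
          rw [sq_sqrt (by positivity)]
      _ = 2 * π * C * ∫ t in -1..1, g t := integral_angular_mul_gaussian_three hg
  refine mul_right_cancel₀ integral_sq_mul_exp_neg_sq_pos.ne' ?_
  rw [← hpolar, hcart]
  ring

theorem toSphere_real_univ_fin_three : (volume : Measure ℝ³).toSphere.real univ = 4 * π := by
  have h := integral_toSphere_comp_inner (g := fun _ => 1) continuous_const
    (u := EuclideanSpace.single 0 1) (by simp)
  simp only [integral_const, smul_eq_mul, mul_one, intervalIntegral.integral_const] at h
  rw [h]
  ring

theorem integral_uniformSphere_three_comp_inner {g : ℝ → ℝ} (hg : Continuous g) (v : ℝ³) :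
    ∫ ξ, g ⟪(ξ : ℝ³), v⟫ ∂uniformSphere 3 = 2⁻¹ * ∫ t in -1..1, g (‖v‖ * t) := by
  obtain ⟨u, hu, hvu⟩ := exists_norm_eq_one_and_eq_norm_smul_s5 v
  have hsphere := integral_toSphere_comp_inner (g := fun t => g (‖v‖ * t)) (by fun_prop) hu
  conv_lhs => rw [hvu]
  simp_rw [real_inner_smul_right]
  rw [uniformSphere, integral_smul_measure, hsphere, ENNReal.toReal_inv, ← measureReal_def,
    toSphere_real_univ_fin_three, smul_eq_mul]
  field_simp
  ring

theorem integral_comp_mul_add_mul_deriv {F F' : ℝ → ℝ}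
    (hF : ∀ t ∈ Ici (0 : ℝ), HasDerivWithinAt F (F' t) (Ici 0) t)
    (hF' : ContinuousOn F' (Ici 0)) {r : ℝ} (hr : 0 ≤ r) :
    ∫ t in 0..1, (F (r * t) + r * t * F' (r * t)) = F r := by
  have hFc : ContinuousOn F (Ici 0) := fun t ht => (hF t ht).continuousWithinAt
  have hmaps : MapsTo (fun t => r * t) (Ici 0) (Ici 0) := fun t ht => mul_nonneg hr ht
  have hderiv : ∀ t ∈ Ioo (0 : ℝ) 1, HasDerivWithinAt (fun t => t * F (r * t))
      (F (r * t) + r * t * F' (r * t)) (Ioi t) t := by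
    intro t ht
    have hlin : HasDerivWithinAt (fun t => r * t) r (Ici 0) t := by
      simpa using ((hasDerivAt_id t).const_mul r).hasDerivWithinAt
    have hcomp : HasDerivWithinAt (fun t => F (r * t)) (F' (r * t) * r) (Ici 0) t :=
      (hF _ (hmaps ht.1.le)).comp t hlin hmaps
    exact ((hasDerivAt_id' t).mul (hcomp.hasDerivAt (Ici_mem_nhds ht.1))).hasDerivWithinAt
      |>.congr_deriv (by ring)
  have hIcc : MapsTo (fun t => r * t) (Icc 0 1) (Ici 0) := hmaps.mono_left Icc_subset_Ici_self
  have hcont : ContinuousOn (fun t => F (r * t) + r * t * F' (r * t)) (uIcc 0 1) := by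
    rw [uIcc_of_le zero_le_one]
    exact (hFc.comp (by fun_prop) hIcc).add
      ((by fun_prop : Continuous fun t => r * t).continuousOn.mul (hF'.comp (by fun_prop) hIcc))
  rw [intervalIntegral.integral_eq_sub_of_hasDeriv_right_of_le zero_le_one
    (continuousOn_id.mul (hFc.comp (by fun_prop) hIcc)) hderiv hcont.intervalIntegrable]
  simp

/-- In dimension `d = 3`, every radial kernel `K(x,y) = F(‖x-y‖)` with continuously
differentiable basis function `F` is the sliced version of the one-dimensional radial
kernel with basis function `f(t) = F(t) + t F'(t)`. -/
theorem radial_kernel_eq_sliced_dim_three (F F' : ℝ → ℝ)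
    (hF : ∀ t ∈ Set.Ici (0 : ℝ), HasDerivWithinAt F (F' t) (Set.Ici 0) t)
    (hF' : ContinuousOn F' (Set.Ici (0 : ℝ)))
    (f : ℝ → ℝ) (hf : ∀ t : ℝ, f t = F t + t * F' t) :
    ∀ x y : EuclideanSpace ℝ (Fin 3),
      (∫ ξ : sphere (0 : EuclideanSpace ℝ (Fin 3)) 1,
        f |⟪(ξ : EuclideanSpace ℝ (Fin 3)), x - y⟫| ∂(uniformSphere 3)) = F ‖x - y‖ := by
  intro x y
  have hf_cont : ContinuousOn f (Ici 0) :=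
    (ContinuousOn.add (fun t ht => (hF t ht).continuousWithinAt) (continuousOn_id.mul hF')).congr
      fun t _ => hf t
  have hr : 0 ≤ ‖x - y‖ := norm_nonneg _
  rw [integral_uniformSphere_three_comp_inner (g := fun s => f |s|)
    (hf_cont.comp_continuous continuous_abs abs_nonneg)]
  simp_rw [abs_mul, abs_of_nonneg hr]
  rw [integral_symm_comp_abs (h := fun t => f (‖x - y‖ * t))
      (hf_cont.comp (by fun_prop) fun t ht => mul_nonneg hr ht) zero_le_one]
  simp_rw [hf, ← mul_assoc]
  rw [integral_comp_mul_add_mul_deriv hF hF' hr]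
  ring
end

section
/- Let d ≥ 1, let x, y ∈ ℝ^d, and let k : ℝ × ℝ → ℝ be a measurable kernel with K(x,y) = ∫_{S^{d-1}} k(⟨ξ,x⟩, ⟨ξ,y⟩) dU(ξ), where U is the uniform probability measure on the unit sphere S^{d-1}. Assume there exists c > 0 such that |k(z₁, z₂)| ≤ c for all z₁, z₂ ∈ ℝ with |z₁|, |z₂| ≤ max(‖x‖, ‖y‖). Let ξ₁, …, ξ_P be independent random variables on a probability space (Ω, 𝒫), each distributed according to U. Then the expected absolute error satisfies 𝔼[ |(1/P) ∑_{p=1}^P k(⟨ξ_p, x⟩, ⟨ξ_p, y⟩) - K(x,y)| ] ≤ √(2π) c / √P. -/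
open MeasureTheory Metric
open scoped RealInnerProductSpace

/-!
The bound comes from the second moment rather than from Hoeffding's inequality: the empirical
mean of `P` independent copies of a variable bounded by `c` has variance at most `c² / P`, and by
Cauchy–Schwarz the mean absolute deviation is at most the standard deviation, giving `c / √P`,
which is below `√(2π) c / √P`.
-/

lemma abs_real_inner_le_norm_of_mem_sphere {E : Type*} [NormedAddCommGroup E]
    [InnerProductSpace ℝ E] {s : E} (hs : s ∈ sphere (0 : E) 1) (x : E) : |⟪s, x⟫| ≤ ‖x‖ := by
  simpa [mem_sphere_zero_iff_norm.mp hs] using abs_real_inner_le_norm s x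

namespace ProbabilityTheory

variable {Ω : Type*} [MeasurableSpace Ω] {μ : Measure Ω} [IsProbabilityMeasure μ]

lemma integral_abs_sub_integral_le_sqrt_variance {Y : Ω → ℝ} (hY : MemLp Y 2 μ) :
    ∫ ω, |Y ω - μ[Y]| ∂μ ≤ √(Var[Y; μ]) := by
  set Z : Ω → ℝ := fun ω => |Y ω - μ[Y]|
  have hZ : MemLp Z 2 μ := (hY.sub (memLp_const _)).abs
  apply Real.le_sqrt_of_sq_le
  have hvar := variance_nonneg Z μ
  rw [variance_eq_sub hZ] at hvar
  rw [variance_eq_integral hY.aemeasurable]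
  simpa [Z, sq_abs] using hvar

lemma variance_mean_le_of_abs_le {ι : Type*} [Fintype ι] {X : ι → Ω → ℝ} {c : ℝ}
    (hX : ∀ i, AEMeasurable (X i) μ) (hbdd : ∀ i, ∀ᵐ ω ∂μ, |X i ω| ≤ c)
    (hindep : Pairwise fun i j => X i ⟂ᵢ[μ] X j) :
    Var[fun ω => 1 / (Fintype.card ι : ℝ) * ∑ i, X i ω; μ] ≤ c ^ 2 / Fintype.card ι := by
  have hvar_le (i : ι) : Var[X i; μ] ≤ c ^ 2 := by
    have := variance_le_sq_of_bounded ((hbdd i).mono fun ω => abs_le.mp) (hX i)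
    rwa [sub_neg_eq_add, ← two_mul, mul_div_cancel_left₀ _ two_ne_zero] at this
  have hmem (i : ι) : MemLp (X i) 2 μ := .of_bound (hX i).aestronglyMeasurable c (hbdd i)
  have hsum : Var[∑ i, X i; μ] = ∑ i, Var[X i; μ] :=
    IndepFun.variance_sum (fun i _ => hmem i) fun i _ j _ hij => hindep hij
  calc Var[fun ω => 1 / (Fintype.card ι : ℝ) * ∑ i, X i ω; μ]
      = (1 / (Fintype.card ι : ℝ)) ^ 2 * ∑ i, Var[X i; μ] := by
        rw [variance_const_mul, ← hsum, Finset.sum_fn]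
    _ ≤ (1 / (Fintype.card ι : ℝ)) ^ 2 * ∑ _i : ι, c ^ 2 := by
        gcongr with i
        exact hvar_le i
    _ = c ^ 2 / Fintype.card ι := by
        simp only [Finset.sum_const, Finset.card_univ, nsmul_eq_mul]
        rcases eq_or_ne (Fintype.card ι : ℝ) 0 with h | h
        · simp [h]
        · field_simp

lemma integral_abs_mean_sub_le {ι : Type*} [Fintype ι] [Nonempty ι] {X : ι → Ω → ℝ} {m c : ℝ}
    (hc : 0 ≤ c) (hX : ∀ i, AEMeasurable (X i) μ) (hbdd : ∀ i, ∀ᵐ ω ∂μ, |X i ω| ≤ c)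
    (hmean : ∀ i, μ[X i] = m) (hindep : Pairwise fun i j => X i ⟂ᵢ[μ] X j) :
    ∫ ω, |1 / (Fintype.card ι : ℝ) * ∑ i, X i ω - m| ∂μ ≤ c / √(Fintype.card ι) := by
  set Y : Ω → ℝ := fun ω => 1 / (Fintype.card ι : ℝ) * ∑ i, X i ω
  have hmem (i : ι) : MemLp (X i) 2 μ := .of_bound (hX i).aestronglyMeasurable c (hbdd i)
  have hY : MemLp Y 2 μ := (memLp_finsetSum _ fun i _ => hmem i).const_mul _
  have hmeanY : μ[Y] = m := by
    simp only [Y, integral_const_mul, hmean,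
      integral_finsetSum _ fun i _ => (hmem i).integrable one_le_two]
    simp
  calc ∫ ω, |Y ω - m| ∂μ ≤ √(Var[Y; μ]) := hmeanY ▸ integral_abs_sub_integral_le_sqrt_variance hY
    _ ≤ √(c ^ 2 / Fintype.card ι) := Real.sqrt_le_sqrt (variance_mean_le_of_abs_le hX hbdd hindep)
    _ = c / √(Fintype.card ι) := by rw [Real.sqrt_div (sq_nonneg c), Real.sqrt_sq hc]

end ProbabilityTheory

open ProbabilityTheory

theorem sliced_kernel_expected_error_bound_general (d : ℕ)
    (x y : EuclideanSpace ℝ (Fin d)) (k : ℝ × ℝ → ℝ) (hk_meas : Measurable k)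
    (K : ℝ)
    (hK : K = ∫ ξ : sphere (0 : EuclideanSpace ℝ (Fin d)) 1,
      k (⟪(ξ : EuclideanSpace ℝ (Fin d)), x⟫, ⟪(ξ : EuclideanSpace ℝ (Fin d)), y⟫)
      ∂(uniformSphere d))
    (c : ℝ) (hc : 0 < c)
    (hbdd : ∀ z₁ z₂ : ℝ, |z₁| ≤ max ‖x‖ ‖y‖ → |z₂| ≤ max ‖x‖ ‖y‖ → |k (z₁, z₂)| ≤ c)
    {Ω : Type*} [MeasurableSpace Ω] (Pr : Measure Ω) [IsProbabilityMeasure Pr]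
    (P : ℕ) (hP : 1 ≤ P)
    (ξ : Fin P → Ω → sphere (0 : EuclideanSpace ℝ (Fin d)) 1)
    (hξ_meas : ∀ p, Measurable (ξ p))
    (hξ_indep : ProbabilityTheory.iIndepFun ξ Pr)
    (hξ_dist : ∀ p, Measure.map (ξ p) Pr = uniformSphere d) :
    (∫ ω, |(1 / (P : ℝ)) * ∑ p : Fin P,
        k (⟪((ξ p ω : sphere (0 : EuclideanSpace ℝ (Fin d)) 1) : EuclideanSpace ℝ (Fin d)), x⟫,
           ⟪((ξ p ω : sphere (0 : EuclideanSpace ℝ (Fin d)) 1) : EuclideanSpace ℝ (Fin d)), y⟫)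
        - K| ∂Pr)
      ≤ Real.sqrt (2 * Real.pi) * c / Real.sqrt P := by
  set f : sphere (0 : EuclideanSpace ℝ (Fin d)) 1 → ℝ := fun s =>
    k (⟪(s : EuclideanSpace ℝ (Fin d)), x⟫, ⟪(s : EuclideanSpace ℝ (Fin d)), y⟫)
  have hf_meas : Measurable f := hk_meas.comp (by fun_prop)
  have hf_bdd (s : sphere (0 : EuclideanSpace ℝ (Fin d)) 1) : |f s| ≤ c :=
    hbdd _ _ ((abs_real_inner_le_norm_of_mem_sphere s.2 x).trans (le_max_left _ _))
      ((abs_real_inner_le_norm_of_mem_sphere s.2 y).trans (le_max_right _ _))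
  have hmean (p : Fin P) : ∫ ω, f (ξ p ω) ∂Pr = K := by
    rw [hK, ← hξ_dist p, integral_map (hξ_meas p).aemeasurable hf_meas.aestronglyMeasurable]
  have : Nonempty (Fin P) := ⟨⟨0, hP⟩⟩
  calc _ ≤ c / √P := by
        simpa using integral_abs_mean_sub_le hc.le
          (fun p => (hf_meas.comp (hξ_meas p)).aemeasurable)
          (fun p => ae_of_all _ fun ω => hf_bdd (ξ p ω)) hmean
          (fun i j hij => (hξ_indep.indepFun hij).comp hf_meas hf_meas)
    _ ≤ √(2 * Real.pi) * c / √P := by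
        have : 1 ≤ √(2 * Real.pi) := Real.one_le_sqrt.mpr (by linarith [Real.pi_gt_three])
        gcongr
        exact le_mul_of_one_le_left hc.le this

/-- Expected absolute error bound `√(2π) c / √P` for the Monte Carlo approximation of a
sliced kernel `K(x,y) = ∫_{S^{d-1}} k(⟨ξ,x⟩,⟨ξ,y⟩) dU(ξ)` by `P` i.i.d. uniform
directions, when `k` is bounded by `c` on the relevant range. -/
theorem sliced_kernel_expected_error_bound (d : ℕ) (hd : 1 ≤ d)
    (x y : EuclideanSpace ℝ (Fin d)) (k : ℝ × ℝ → ℝ) (hk_meas : Measurable k)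
    (K : ℝ)
    (hK : K = ∫ ξ : sphere (0 : EuclideanSpace ℝ (Fin d)) 1,
      k (⟪(ξ : EuclideanSpace ℝ (Fin d)), x⟫, ⟪(ξ : EuclideanSpace ℝ (Fin d)), y⟫)
      ∂(uniformSphere d))
    (c : ℝ) (hc : 0 < c)
    (hbdd : ∀ z₁ z₂ : ℝ, |z₁| ≤ max ‖x‖ ‖y‖ → |z₂| ≤ max ‖x‖ ‖y‖ → |k (z₁, z₂)| ≤ c)
    {Ω : Type*} [MeasurableSpace Ω] (Pr : Measure Ω) [IsProbabilityMeasure Pr]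
    (P : ℕ) (hP : 1 ≤ P)
    (ξ : Fin P → Ω → sphere (0 : EuclideanSpace ℝ (Fin d)) 1)
    (hξ_meas : ∀ p, Measurable (ξ p))
    (hξ_indep : ProbabilityTheory.iIndepFun ξ Pr)
    (hξ_dist : ∀ p, Measure.map (ξ p) Pr = uniformSphere d) :
    (∫ ω, |(1 / (P : ℝ)) * ∑ p : Fin P,
        k (⟪((ξ p ω : sphere (0 : EuclideanSpace ℝ (Fin d)) 1) : EuclideanSpace ℝ (Fin d)), x⟫,
           ⟪((ξ p ω : sphere (0 : EuclideanSpace ℝ (Fin d)) 1) : EuclideanSpace ℝ (Fin d)), y⟫)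
        - K| ∂Pr)
      ≤ Real.sqrt (2 * Real.pi) * c / Real.sqrt P :=
  sliced_kernel_expected_error_bound_general d x y k hk_meas K hK c hc hbdd Pr P hP ξ hξ_meas
    hξ_indep hξ_dist
end

section
/- Let d ≥ 1 and σ > 0, and let f_σ : ℝ → ℝ be the function f_σ(x) = ∑_{n=0}^∞ ((-1)ⁿ √π Γ((2n+d)/2) / (2ⁿ σ^{2n} n! Γ(d/2) Γ((2n+1)/2))) x^{2n}, i.e., f_σ(x) = ₁F₁(d/2; 1/2; -x²/(2σ²)). Then |f_σ(x)| ≤ 1 for every x ∈ ℝ. -/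
/-!
With `t = x / σ` and the weight `w(r) = r^(d-1) e^(-r²/2)` on `(0, ∞)` (the radial profile of
the standard Gaussian on `ℝ^d`), Legendre's duplication formula turns the `n`-th coefficient
into `(-1)^n t^(2n) / (2n)!` times the moment ratio `∫ r^(2n) w / ∫ w`. Summing the cosine
series under the integral gives `f_σ(x) = ∫ cos(t r) w(r) dr / ∫ w`, and `|cos| ≤ 1`.
-/

open Real Set Filter Topology MeasureTheory
open scoped Nat

noncomputable def halfGaussianMoment (k : ℕ) : ℝ :=
  ∫ r in Ioi (0 : ℝ), r ^ k * exp (-r ^ 2 / 2)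

lemma integrableOn_pow_mul_exp_neg_sq_div_two (k : ℕ) :
    IntegrableOn (fun r : ℝ ↦ r ^ k * exp (-r ^ 2 / 2)) (Ioi 0) := by
  refine (integrableOn_rpow_mul_exp_neg_mul_sq (b := 1 / 2) (by norm_num)
    (s := k) (by linarith [k.cast_nonneg (α := ℝ)])).congr_fun (fun r _ ↦ ?_) measurableSet_Ioi
  simp only [rpow_natCast]
  ring_nf

lemma halfGaussianMoment_eq_Gamma (k : ℕ) :
    halfGaussianMoment k = 2 ^ (((k : ℝ) + 1) / 2) / 2 * Gamma (((k : ℝ) + 1) / 2) := by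
  have h := integral_rpow_mul_exp_neg_mul_rpow (p := 2) (q := k) (b := 1 / 2) two_pos
    (by linarith [k.cast_nonneg (α := ℝ)]) one_half_pos
  have h2 : ((1 : ℝ) / 2) ^ (-((k : ℝ) + 1) / 2) = 2 ^ (((k : ℝ) + 1) / 2) := by
    rw [one_div, inv_rpow zero_le_two, ← rpow_neg zero_le_two, neg_div, neg_neg]
  rw [h2, ← div_eq_mul_one_div] at h
  rw [halfGaussianMoment, ← h]
  refine setIntegral_congr_fun measurableSet_Ioi fun r _ ↦ ?_
  simp only [rpow_natCast, rpow_two]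
  ring_nf

lemma halfGaussianMoment_pos (k : ℕ) : 0 < halfGaussianMoment k := by
  rw [halfGaussianMoment_eq_Gamma]
  have := Gamma_pos_of_pos (s := ((k : ℝ) + 1) / 2) (by positivity)
  positivity

lemma halfGaussianMoment_add_two (k : ℕ) :
    halfGaussianMoment (k + 2) = (k + 1) * halfGaussianMoment k := by
  have h : ((k + 2 : ℕ) + 1 : ℝ) / 2 = ((k : ℝ) + 1) / 2 + 1 := by push_cast; ring
  rw [halfGaussianMoment_eq_Gamma, halfGaussianMoment_eq_Gamma, h, Gamma_add_one (by positivity),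
    rpow_add_one two_ne_zero]
  ring

lemma Gamma_nat_add_half_mul_factorial_mul_four_pow (n : ℕ) :
    Gamma (n + 1 / 2) * n ! * 4 ^ n = √π * (2 * n)! := by
  have h := Gamma_mul_Gamma_add_half ((n : ℝ) + 1 / 2)
  rw [show (n : ℝ) + 1 / 2 + 1 / 2 = n + 1 by ring,
    show 2 * ((n : ℝ) + 1 / 2) = (2 * n : ℕ) + 1 by push_cast; ring,
    Gamma_nat_eq_factorial, Gamma_nat_eq_factorial,
    show (1 : ℝ) - ((2 * n : ℕ) + 1) = -(2 * n : ℕ) by push_cast; ring,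
    rpow_neg zero_le_two, rpow_natCast, pow_mul] at h
  rw [h]
  field_simp
  norm_num

lemma summable_of_norm_succ_le_mul_of_tendsto_zero {E : Type*} [SeminormedAddCommGroup E]
    [CompleteSpace E] {f : ℕ → E} {q : ℕ → ℝ} (hq : Tendsto q atTop (𝓝 0))
    (h : ∀ n, ‖f (n + 1)‖ ≤ q n * ‖f n‖) : Summable f := by
  refine summable_of_ratio_norm_eventually_le (r := 1 / 2) (by norm_num) ?_
  filter_upwards [hq.eventually (eventually_le_nhds one_half_pos)] with n hn
  exact (h n).trans (mul_le_mul_of_nonneg_right hn (norm_nonneg _))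

lemma summable_abs_pow_div_factorial_mul_halfGaussianMoment (t : ℝ) (m : ℕ) :
    Summable fun n : ℕ ↦ |t| ^ (2 * n) / (2 * n)! * halfGaussianMoment (2 * n + m) := by
  have hq : Tendsto (fun n : ℕ ↦ t ^ 2 * (m + 1) * (1 / ((n : ℝ) + 1))) atTop (𝓝 0) := by
    convert tendsto_one_div_add_atTop_nhds_zero_nat.const_mul (t ^ 2 * (m + 1)) using 2
    rw [mul_zero]
  refine summable_of_norm_succ_le_mul_of_tendsto_zero hq fun n ↦ ?_
  have hsucc : halfGaussianMoment (2 * (n + 1) + m) =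
      (2 * n + m + 1) * halfGaussianMoment (2 * n + m) := by
    rw [show 2 * (n + 1) + m = 2 * n + m + 2 by ring, halfGaussianMoment_add_two]
    push_cast; ring
  have hfac : ((2 * (n + 1))! : ℝ) = (2 * n + 2) * (2 * n + 1) * (2 * n)! := by
    rw [show 2 * (n + 1) = 2 * n + 1 + 1 by ring, Nat.factorial_succ, Nat.factorial_succ]
    push_cast; ring
  have hratio :
      (2 * n + m + 1 : ℝ) / ((2 * n + 2) * (2 * n + 1)) ≤ (m + 1) * (1 / (n + 1)) := by
    rw [div_le_iff₀ (by positivity)]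
    field_simp
    have hm := Nat.cast_nonneg (α := ℝ) m
    have hn := Nat.cast_nonneg (α := ℝ) n
    nlinarith [mul_nonneg hm hn]
  have hg : ∀ k, 0 ≤ |t| ^ (2 * k) / (2 * k)! * halfGaussianMoment (2 * k + m) :=
    fun k ↦ mul_nonneg (by positivity) (halfGaussianMoment_pos _).le
  rw [Real.norm_of_nonneg (hg _), Real.norm_of_nonneg (hg _), hsucc, hfac]
  calc |t| ^ (2 * (n + 1)) / ((2 * n + 2) * (2 * n + 1) * (2 * n)!) *
          ((2 * n + m + 1) * halfGaussianMoment (2 * n + m))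
      = t ^ 2 * ((2 * n + m + 1) / ((2 * n + 2) * (2 * n + 1))) *
          (|t| ^ (2 * n) / (2 * n)! * halfGaussianMoment (2 * n + m)) := by
        rw [mul_add_one, pow_add, sq_abs]; field_simp
    _ ≤ t ^ 2 * ((m + 1) * (1 / (n + 1))) *
          (|t| ^ (2 * n) / (2 * n)! * halfGaussianMoment (2 * n + m)) :=
        mul_le_mul_of_nonneg_right (mul_le_mul_of_nonneg_left hratio (sq_nonneg t)) (hg n)
    _ = _ := by ring

lemma hasSum_halfGaussianMoment_cos (t : ℝ) (m : ℕ) :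
    HasSum (fun n : ℕ ↦ (-1) ^ n * t ^ (2 * n) / (2 * n)! * halfGaussianMoment (2 * n + m))
      (∫ r in Ioi (0 : ℝ), cos (t * r) * (r ^ m * exp (-r ^ 2 / 2))) := by
  set F : ℕ → ℝ → ℝ := fun n r ↦
    (-1) ^ n * t ^ (2 * n) / (2 * n)! * (r ^ (2 * n + m) * exp (-r ^ 2 / 2))
  have hF_int (n : ℕ) : IntegrableOn (F n) (Ioi 0) :=
    (integrableOn_pow_mul_exp_neg_sq_div_two _).const_mul _
  have hF_norm (n : ℕ) : ∫ r in Ioi (0 : ℝ), ‖F n r‖ =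
      |t| ^ (2 * n) / (2 * n)! * halfGaussianMoment (2 * n + m) := by
    rw [halfGaussianMoment, ← integral_const_mul]
    refine setIntegral_congr_fun measurableSet_Ioi fun r (hr : 0 < r) ↦ ?_
    simp only [F, Real.norm_eq_abs, abs_mul, abs_div, abs_pow, abs_neg, abs_one, one_pow,
      one_mul, Nat.abs_cast, abs_exp, abs_of_pos hr]
  have hsum := hasSum_integral_of_summable_integral_norm hF_int
    ((summable_abs_pow_div_factorial_mul_halfGaussianMoment t m).congr fun n ↦ (hF_norm n).symm)
  have hF_cos : ∀ r, ∑' n, F n r = cos (t * r) * (r ^ m * exp (-r ^ 2 / 2)) := fun r ↦ by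
    rw [← ((Real.hasSum_cos (t * r)).mul_right _).tsum_eq]
    exact tsum_congr fun n ↦ by simp only [F, mul_pow, pow_add]; ring
  simp only [hF_cos, F, integral_const_mul] at hsum
  exact hsum

lemma abs_setIntegral_cos_mul_le (t : ℝ) (m : ℕ) :
    |∫ r in Ioi (0 : ℝ), cos (t * r) * (r ^ m * exp (-r ^ 2 / 2))| ≤
      halfGaussianMoment m := by
  rw [← Real.norm_eq_abs]
  refine norm_integral_le_of_norm_le (integrableOn_pow_mul_exp_neg_sq_div_two m) ?_
  refine (ae_restrict_iff' measurableSet_Ioi).mpr (ae_of_all _ fun r (hr : 0 < r) ↦ ?_)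
  have hw : 0 ≤ r ^ m * exp (-r ^ 2 / 2) := by positivity
  rw [norm_mul, Real.norm_of_nonneg hw]
  exact mul_le_of_le_one_left hw (abs_cos_le_one _)

lemma sqrt_pi_mul_Gamma_div_eq_halfGaussianMoment_div (m n : ℕ) :
    √π * Gamma ((2 * n + ((m : ℝ) + 1)) / 2) /
        (2 ^ n * n ! * Gamma (((m : ℝ) + 1) / 2) * Gamma ((2 * n + 1) / 2)) =
      halfGaussianMoment (2 * n + m) / ((2 * n)! * halfGaussianMoment m) := by
  have hΓ : Gamma ((2 * n + 1) / 2) * n ! * (2 ^ n * 2 ^ n) = √π * (2 * n)! := by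
    rw [← mul_pow, show (2 * 2 : ℝ) = 4 by norm_num,
      show (2 * n + 1) / 2 = (n : ℝ) + 1 / 2 by ring]
    exact Gamma_nat_add_half_mul_factorial_mul_four_pow n
  have hexp : ((2 * n + m : ℕ) + 1 : ℝ) / 2 = n + ((m : ℝ) + 1) / 2 := by push_cast; ring
  have hΓm := Gamma_pos_of_pos (s := ((m : ℝ) + 1) / 2) (by positivity)
  rw [halfGaussianMoment_eq_Gamma, halfGaussianMoment_eq_Gamma, hexp, rpow_add two_pos,
    rpow_natCast, show (2 * n + ((m : ℝ) + 1)) / 2 = n + ((m : ℝ) + 1) / 2 by ring,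
    div_eq_div_iff (by positivity) (by positivity)]
  linear_combination -(2 : ℝ) ^ (((m : ℝ) + 1) / 2) / 2 * Gamma (n + ((m : ℝ) + 1) / 2) *
    Gamma (((m : ℝ) + 1) / 2) * hΓ

theorem sliced_gaussian_abs_le_one_general (d : ℕ) (hd : 1 ≤ d) (σ : ℝ) (x : ℝ) :
    |∑' n : ℕ,
      ((-1 : ℝ) ^ n * Real.sqrt Real.pi * Real.Gamma ((2 * (n : ℝ) + d) / 2) /
          (2 ^ n * σ ^ (2 * n) * (n.factorial : ℝ) * Real.Gamma ((d : ℝ) / 2) *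
            Real.Gamma ((2 * (n : ℝ) + 1) / 2))) * x ^ (2 * n)| ≤ 1 := by
  obtain ⟨m, rfl⟩ := Nat.exists_eq_add_of_le' hd
  have hM := halfGaussianMoment_pos m
  have hterm (n : ℕ) :
      (-1 : ℝ) ^ n * √π * Gamma ((2 * (n : ℝ) + (m + 1 : ℕ)) / 2) /
          (2 ^ n * σ ^ (2 * n) * n ! * Gamma (((m + 1 : ℕ) : ℝ) / 2) *
            Gamma ((2 * (n : ℝ) + 1) / 2)) * x ^ (2 * n) =
        (halfGaussianMoment m)⁻¹ *
          ((-1) ^ n * (x / σ) ^ (2 * n) / (2 * n)! * halfGaussianMoment (2 * n + m)) := by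
    have h := sqrt_pi_mul_Gamma_div_eq_halfGaussianMoment_div m n
    push_cast
    rw [div_pow]
    linear_combination (-1) ^ n * (x ^ (2 * n) / σ ^ (2 * n)) * h
  rw [tsum_congr hterm, tsum_mul_left, (hasSum_halfGaussianMoment_cos (x / σ) m).tsum_eq,
    abs_mul, abs_inv, abs_of_pos hM, inv_mul_le_one₀ hM]
  exact abs_setIntegral_cos_mul_le (x / σ) m

/-- The one-dimensional counterpart `f_σ(x) = ₁F₁(d/2; 1/2; -x²/(2σ²))` of the
`d`-dimensional Gaussian kernel, given by its globally convergent power series, is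
bounded by `1` in absolute value. -/
theorem sliced_gaussian_abs_le_one (d : ℕ) (hd : 1 ≤ d) (σ : ℝ) (hσ : 0 < σ) (x : ℝ) :
    |∑' n : ℕ,
      ((-1 : ℝ) ^ n * Real.sqrt Real.pi * Real.Gamma ((2 * (n : ℝ) + d) / 2) /
          (2 ^ n * σ ^ (2 * n) * (n.factorial : ℝ) * Real.Gamma ((d : ℝ) / 2) *
            Real.Gamma ((2 * (n : ℝ) + 1) / 2))) * x ^ (2 * n)| ≤ 1 :=
  sliced_gaussian_abs_le_one_general d hd σ x
end

section
/- Let d ≥ 2 and r ∈ (0, 2). Then for all x, y ∈ ℝ^d, ∫_{S^{d-1}} (√π Γ((d+r)/2) / (Γ(d/2) Γ((r+1)/2))) |⟨ξ, x - y⟩|^r dU(ξ) = ‖x - y‖^r, where U is the uniform (normalized rotation-invariant) probability measure on the unit sphere S^{d-1} ⊆ ℝ^d. Equivalently, the Riesz kernel K(x,y) = -‖x-y‖^r is the sliced version of the one-dimensional kernel k(s,t) = -(√π Γ((d+r)/2)/(Γ(d/2)Γ((r+1)/2))) |s-t|^r. -/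
/-!
Fix `v = x - y` and compute `∫ |⟪z, v⟫| ^ r * exp (-‖z‖ ^ 2) dz` in two ways. In polar
coordinates the integrand is `r`-homogeneous, so the integral splits as the sphere integral times
`Γ((d + r) / 2) / 2`. Rotating `v / ‖v‖` to a coordinate axis, it splits into one-dimensional
Gaussian integrals and equals `‖v‖ ^ r * Γ((r + 1) / 2) * √π ^ (d - 1)`. The case `r = 0` gives
the area `2 √π ^ d / Γ(d / 2)` of the sphere, and dividing by it yields the constant.
-/

open MeasureTheory Metric
open scoped RealInnerProductSpace

open Real Set

theorem integral_Ioi_rpow_mul_exp_neg_sq {q : ℝ} (hq : -1 < q) :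
    ∫ x in Ioi (0 : ℝ), x ^ q * exp (-x ^ 2) = Gamma ((q + 1) / 2) / 2 := by
  simpa [div_eq_inv_mul] using integral_rpow_mul_exp_neg_rpow two_pos hq

theorem integral_abs_rpow_mul_exp_neg_sq {q : ℝ} (hq : -1 < q) :
    ∫ x : ℝ, |x| ^ q * exp (-x ^ 2) = Gamma ((q + 1) / 2) := by
  have h := integral_comp_abs (f := fun s => s ^ q * exp (-s ^ 2))
  simp only [sq_abs] at h
  rw [h, integral_Ioi_rpow_mul_exp_neg_sq hq]
  ring

theorem EuclideanSpace.integral_comp_apply_mul_exp_neg_norm_sq {ι : Type*} [Fintype ι]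
    [DecidableEq ι] (i : ι) (g : ℝ → ℝ) :
    ∫ w : EuclideanSpace ℝ ι, g (w i) * exp (-‖w‖ ^ 2)
      = (∫ t, g t * exp (-t ^ 2)) * √π ^ (Fintype.card ι - 1) := by
  let f : ι → ℝ → ℝ := fun j t => (if j = i then g t else 1) * exp (-t ^ 2)
  have hprod : ∀ w : EuclideanSpace ℝ ι, g (w i) * exp (-‖w‖ ^ 2) = ∏ j, f j (w j) := by
    intro w
    rw [Finset.prod_mul_distrib, Fintype.prod_ite_eq', ← exp_sum, EuclideanSpace.norm_sq_eq]
    simp [Finset.sum_neg_distrib]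
  have hfactor : ∀ j, ∫ t, f j t = if j = i then ∫ t, g t * exp (-t ^ 2) else √π := by
    intro j
    split_ifs with hj
    · simp [f, hj]
    · simpa [f, hj] using integral_gaussian 1
  simp_rw [hprod]
  rw [← (PiLp.volume_preserving_toLp ι).integral_comp
      (MeasurableEquiv.toLp 2 _).measurableEmbedding,
    integral_fintype_prod_volume_eq_prod f, Fintype.prod_eq_mul_prod_compl i, hfactor, if_pos rfl,
    Finset.prod_congr rfl fun j hj => (hfactor j).trans (if_neg (by simpa using hj)),
    Finset.prod_const, Finset.card_compl, Finset.card_singleton]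

theorem MeasureTheory.Measure.integral_volumeIoiPow (n : ℕ) (g : ℝ → ℝ) :
    ∫ x, g x ∂(Measure.volumeIoiPow n) = ∫ x in Ioi (0 : ℝ), x ^ n * g x := by
  rw [Measure.volumeIoiPow, integral_withDensity_eq_integral_toReal_smul
      (measurable_subtype_coe.pow_const _).ennreal_ofReal (by simp),
    integral_subtype_comap measurableSet_Ioi fun x : ℝ => (ENNReal.ofReal (x ^ n)).toReal • g x]
  refine setIntegral_congr_fun measurableSet_Ioi fun x hx => ?_
  rw [ENNReal.toReal_ofReal (pow_nonneg hx.out.le _), smul_eq_mul]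

section NormedSpace

variable {E : Type*} [NormedAddCommGroup E] [NormedSpace ℝ E] [FiniteDimensional ℝ E]
  [MeasurableSpace E] [BorelSpace E]

theorem integral_mul_exp_neg_norm_sq_of_homogeneous [Nontrivial E] (μ : Measure E)
    [μ.IsAddHaarMeasure]
    {g : E → ℝ} {r : ℝ} (hg : ∀ c : ℝ, 0 < c → ∀ x, g (c • x) = c ^ r * g x)
    (hr : -(Module.finrank ℝ E : ℝ) < r) :
    ∫ z, g z * exp (-‖z‖ ^ 2) ∂μ
      = (∫ ξ, g ξ ∂μ.toSphere) * (Gamma ((Module.finrank ℝ E + r) / 2) / 2) := by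
  set n := Module.finrank ℝ E
  have hpolar : ∀ z : ({0}ᶜ : Set E),
      g z * exp (-‖(z : E)‖ ^ 2) = g (homeomorphUnitSphereProd E z).1
        * ((homeomorphUnitSphereProd E z).2 ^ r * exp (-(homeomorphUnitSphereProd E z).2 ^ 2)) := by
    intro z
    have hz : 0 < ‖(z : E)‖ := norm_pos_iff.2 z.2
    rw [homeomorphUnitSphereProd_apply_fst_coe, homeomorphUnitSphereProd_apply_snd_coe,
      hg _ (inv_pos.2 hz), inv_rpow hz.le]
    field_simp
  have hradial : ∫ ρ, (ρ : ℝ) ^ r * exp (-(ρ : ℝ) ^ 2) ∂(Measure.volumeIoiPow (n - 1))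
      = Gamma ((n + r) / 2) / 2 := by
    have hn : 1 ≤ n := Module.finrank_pos
    rw [Measure.integral_volumeIoiPow (g := fun ρ => ρ ^ r * exp (-ρ ^ 2)),
      show ((n : ℝ) + r) / 2 = ((n - 1 + r) + 1) / 2 by ring,
      ← integral_Ioi_rpow_mul_exp_neg_sq (by linarith)]
    refine setIntegral_congr_fun measurableSet_Ioi fun x hx => ?_
    rw [← mul_assoc, ← rpow_natCast, ← rpow_add hx, Nat.cast_sub hn, Nat.cast_one]
  calc ∫ z, g z * exp (-‖z‖ ^ 2) ∂μ
      = ∫ z : ({0}ᶜ : Set E), g z * exp (-‖(z : E)‖ ^ 2) ∂(μ.comap (↑)) := by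
        rw [integral_subtype_comap (measurableSet_singleton _).compl
          (fun z => g z * exp (-‖z‖ ^ 2)), restrict_compl_singleton]
    _ = ∫ p, g p.1 * ((p.2 : ℝ) ^ r * exp (-(p.2 : ℝ) ^ 2))
          ∂(μ.toSphere.prod (Measure.volumeIoiPow (n - 1))) := by
        simp_rw [hpolar]
        exact (Measure.measurePreserving_homeomorphUnitSphereProd μ).integral_comp
          (Homeomorph.measurableEmbedding _)
          (fun p => g p.1 * ((p.2 : ℝ) ^ r * exp (-(p.2 : ℝ) ^ 2)))
    _ = _ := by
        rw [integral_prod_mul (fun ξ : sphere (0 : E) 1 => g ξ)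
          (fun ρ : Ioi (0 : ℝ) => (ρ : ℝ) ^ r * exp (-(ρ : ℝ) ^ 2)), hradial]

end NormedSpace

section InnerProductSpace

variable {E : Type*} [NormedAddCommGroup E] [InnerProductSpace ℝ E] [FiniteDimensional ℝ E]
  [MeasurableSpace E] [BorelSpace E]

local notation "n" => Module.finrank ℝ E

theorem integral_comp_inner_mul_exp_neg_norm_sq {u : E} (hu : ‖u‖ = 1) (g : ℝ → ℝ) :
    ∫ z : E, g ⟪u, z⟫ * exp (-‖z‖ ^ 2)
      = (∫ t, g t * exp (-t ^ 2)) * √π ^ (n - 1) := by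
  classical
  obtain ⟨s, b, hus, hb⟩ := (orthonormal_subsingleton_iff.2 fun ⟨_, rfl⟩ => hu :
    Orthonormal ℝ ((↑) : ({u} : Set E) → E)).exists_orthonormalBasis_extension
  have hbu : b ⟨u, hus rfl⟩ = u := by rw [hb]
  rw [Module.finrank_eq_card_basis b.toBasis,
    ← EuclideanSpace.integral_comp_apply_mul_exp_neg_norm_sq ⟨u, hus rfl⟩,
    ← b.measurePreserving_repr.integral_comp b.repr.toHomeomorph.measurableEmbedding]
  simp [b.repr_apply_apply, hbu]

theorem integral_abs_inner_rpow_toSphere_mul_Gamma {v : E} (hv : v ≠ 0) {r : ℝ} (hr : -1 < r) :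
    (∫ ξ, |⟪(ξ : E), v⟫| ^ r ∂(volume : Measure E).toSphere) * (Gamma ((n + r) / 2) / 2)
      = ‖v‖ ^ r * Gamma ((r + 1) / 2) * √π ^ (n - 1) := by
  have : Nontrivial E := ⟨⟨v, 0, hv⟩⟩
  have hn : (1 : ℝ) ≤ n := Nat.one_le_cast.2 Module.finrank_pos
  have hscale : ∀ z : E, |⟪z, v⟫| ^ r = ‖v‖ ^ r * |⟪‖v‖⁻¹ • v, z⟫| ^ r := by
    intro z
    rw [real_inner_smul_left, abs_mul, abs_inv, abs_norm, mul_rpow (by positivity) (abs_nonneg _),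
      ← mul_assoc, ← mul_rpow (norm_nonneg _) (by positivity),
      mul_inv_cancel₀ (norm_ne_zero_iff.2 hv), one_rpow, one_mul, real_inner_comm]
  have hhom : ∀ c : ℝ, 0 < c → ∀ x : E, |⟪c • x, v⟫| ^ r = c ^ r * |⟪x, v⟫| ^ r := by
    intro c hc x
    rw [real_inner_smul_left, abs_mul, abs_of_pos hc, mul_rpow hc.le (abs_nonneg _)]
  rw [← integral_mul_exp_neg_norm_sq_of_homogeneous (g := fun z => |⟪z, v⟫| ^ r) volume hhom
    (by linarith)]
  simp_rw [hscale, mul_assoc, integral_const_mul]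
  have hu : ‖‖v‖⁻¹ • v‖ = 1 := by
    rw [norm_smul, norm_inv, norm_norm, inv_mul_cancel₀ (norm_ne_zero_iff.2 hv)]
  rw [integral_comp_inner_mul_exp_neg_norm_sq hu (fun t => |t| ^ r),
    integral_abs_rpow_mul_exp_neg_sq hr]

theorem toSphere_real_univ_mul_Gamma [Nontrivial E] :
    (volume : Measure E).toSphere.real univ * (Gamma (n / 2) / 2) = √π ^ n := by
  obtain ⟨v, hv⟩ := exists_ne (0 : E)
  have h := integral_abs_inner_rpow_toSphere_mul_Gamma hv (r := 0) (by norm_num)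
  simp only [rpow_zero, integral_const, smul_eq_mul, mul_one, add_zero, zero_add, one_mul,
    Gamma_one_half_eq] at h
  rw [h, mul_pow_sub_one Module.finrank_pos.ne']

theorem integral_abs_inner_rpow_normalized_toSphere {v : E} (hv : v ≠ 0) {r : ℝ} (hr : -1 < r) :
    √π * Gamma ((n + r) / 2) / (Gamma (n / 2) * Gamma ((r + 1) / 2)) *
      ∫ ξ, |⟪(ξ : E), v⟫| ^ r
        ∂(((volume : Measure E).toSphere univ)⁻¹ • (volume : Measure E).toSphere)
      = ‖v‖ ^ r := by
  have : Nontrivial E := ⟨⟨v, 0, hv⟩⟩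
  have hn : (1 : ℝ) ≤ n := Nat.one_le_cast.2 Module.finrank_pos
  have hsphere := toSphere_real_univ_mul_Gamma (E := E)
  have hint := integral_abs_inner_rpow_toSphere_mul_Gamma hv hr
  rw [integral_smul_measure, ENNReal.toReal_inv, ← measureReal_def, smul_eq_mul]
  have hΓn := Gamma_pos_of_pos (show 0 < (n : ℝ) / 2 by positivity)
  have hΓnr := Gamma_pos_of_pos (show 0 < ((n : ℝ) + r) / 2 by linarith)
  have hΓr := Gamma_pos_of_pos (show 0 < (r + 1) / 2 by linarith)
  have hS : 0 < (volume : Measure E).toSphere.real univ := by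
    refine pos_of_mul_pos_left ?_ (by positivity : 0 ≤ Gamma (n / 2) / 2)
    rw [hsphere]
    positivity
  rw [← pow_sub_one_mul Module.finrank_pos.ne'] at hsphere
  field_simp
  linear_combination 2 * √π * hint - 2 * ‖v‖ ^ r * Gamma ((r + 1) / 2) * hsphere

end InnerProductSpace

theorem riesz_kernel_sliced_general (d : ℕ) (r : ℝ) (hr : r ∈ Set.Ioo (0 : ℝ) 2)
    (x y : EuclideanSpace ℝ (Fin d)) :
    (∫ ξ : sphere (0 : EuclideanSpace ℝ (Fin d)) 1,
        (Real.sqrt Real.pi * Real.Gamma (((d : ℝ) + r) / 2) /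
            (Real.Gamma ((d : ℝ) / 2) * Real.Gamma ((r + 1) / 2))) *
          |⟪(ξ : EuclideanSpace ℝ (Fin d)), x - y⟫| ^ r ∂(uniformSphere d))
      = ‖x - y‖ ^ r := by
  rcases eq_or_ne (x - y) 0 with hxy | hxy
  · simp [hxy, zero_rpow hr.1.ne']
  · rw [integral_const_mul, uniformSphere]
    simpa only [finrank_euclideanSpace_fin, Fintype.card_fin] using
      integral_abs_inner_rpow_normalized_toSphere hxy (by linarith [hr.1])

/-- The Riesz kernel `-‖x-y‖^r`, `r ∈ (0,2)`, is the sliced version of the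
one-dimensional kernel `-(√π Γ((d+r)/2)/(Γ(d/2)Γ((r+1)/2))) |s-t|^r`:
`∫_{S^{d-1}} (√π Γ((d+r)/2)/(Γ(d/2)Γ((r+1)/2))) |⟨ξ,x-y⟩|^r dU(ξ) = ‖x-y‖^r`. -/
theorem riesz_kernel_sliced (d : ℕ) (hd : 2 ≤ d) (r : ℝ) (hr : r ∈ Set.Ioo (0 : ℝ) 2)
    (x y : EuclideanSpace ℝ (Fin d)) :
    (∫ ξ : sphere (0 : EuclideanSpace ℝ (Fin d)) 1,
        (Real.sqrt Real.pi * Real.Gamma (((d : ℝ) + r) / 2) /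
            (Real.Gamma ((d : ℝ) / 2) * Real.Gamma ((r + 1) / 2))) *
          |⟪(ξ : EuclideanSpace ℝ (Fin d)), x - y⟫| ^ r ∂(uniformSphere d))
      = ‖x - y‖ ^ r :=
  riesz_kernel_sliced_general d r hr x y
end

section
/- Let L ∈ ℕ with L ≥ 1, let z₁ ≤ z₂ ≤ … ≤ z_L be real numbers and v₁, …, v_L ∈ ℝ. Define partial sums aᵢ = ∑_{n=1}^{i} vₙ for i = 1, …, L (with a₀ = 0), and b_m = ∑_{i=1}^{m} aᵢ (z_{i+1} - z_i) for m = 0, …, L-1 (with b₀ = 0). Then for every m ∈ {1, …, L}, -∑_{n=1}^{L} vₙ |zₙ - z_m| = b_{L-1} - 2 b_{m-1} - a_L (z_L - z_m). -/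
/-- Correctness of the linear-time sorting-based algorithm for kernel sums with the
one-dimensional negative distance kernel: for sorted points `z₁ ≤ … ≤ z_L` with weights
`vₙ`, partial sums `aᵢ = ∑_{n=1}^{i} vₙ` and `b_m = ∑_{i=1}^{m} aᵢ (z_{i+1} - z_i)`,
one has `-∑_{n=1}^{L} vₙ |zₙ - z_m| = b_{L-1} - 2 b_{m-1} - a_L (z_L - z_m)`. -/
theorem negative_distance_sorting_algorithm (L : ℕ) (hL : 1 ≤ L) (z v : ℕ → ℝ)
    (hz : ∀ i : ℕ, 1 ≤ i → i < L → z i ≤ z (i + 1))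
    (a : ℕ → ℝ) (ha : ∀ i : ℕ, a i = ∑ n ∈ Finset.Icc 1 i, v n)
    (b : ℕ → ℝ) (hb : ∀ m : ℕ, b m = ∑ i ∈ Finset.Icc 1 m, a i * (z (i + 1) - z i)) :
    ∀ m : ℕ, 1 ≤ m → m ≤ L →
      -∑ n ∈ Finset.Icc 1 L, v n * |z n - z m|
        = b (L - 1) - 2 * b (m - 1) - a L * (z L - z m) := by
  -- Abel summation
  have habel : ∀ m : ℕ, 1 ≤ m →
      ∑ n ∈ Finset.Icc 1 m, v n * z n = a m * z m - b (m - 1) := by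
    intro m hm
    induction m, hm using Nat.le_induction with
    | base => simp [ha, hb]
    | succ m hm ih =>
      rw [Finset.sum_Icc_succ_top (by omega : 1 ≤ m + 1), ih]
      have hv : v (m + 1) = a (m + 1) - a m := by
        rw [ha, ha, Finset.sum_Icc_succ_top (by omega : 1 ≤ m + 1)]; ring
      have hbm : b m = b (m - 1) + a m * (z (m + 1) - z m) := by
        obtain ⟨k, rfl⟩ : ∃ k, m = k + 1 := ⟨m - 1, by omega⟩
        rw [hb (k + 1), hb ((k + 1) - 1), Finset.sum_Icc_succ_top (by omega : 1 ≤ k + 1)]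
        simp
      simp only [Nat.add_sub_cancel]
      rw [hv, hbm]; ring
  have hmono : ∀ n m : ℕ, 1 ≤ n → n ≤ m → m ≤ L → z n ≤ z m := by
    intro n m h1 hnm
    induction m, hnm using Nat.le_induction with
    | base => intro _; exact le_rfl
    | succ m hm ih =>
      intro hmL
      exact (ih (by omega)).trans (hz m (by omega) (by omega))
  intro m hm1 hmL
  have hIcc : ∀ k : ℕ, Finset.Icc 1 k = Finset.Ioc 0 k := by
    intro k
    rw [show (1 : ℕ) = 0 + 1 from rfl, Finset.Icc_add_one_left_eq_Ioc]
  have hsplit : ∀ f : ℕ → ℝ, ∑ n ∈ Finset.Icc 1 L, f n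
      = ∑ n ∈ Finset.Icc 1 m, f n + ∑ n ∈ Finset.Ioc m L, f n := by
    intro f
    rw [hIcc L, hIcc m, Finset.sum_Ioc_consecutive _ (Nat.zero_le m) hmL]
  have h1 : ∑ n ∈ Finset.Icc 1 m, v n * |z n - z m|
      = a m * z m - ∑ n ∈ Finset.Icc 1 m, v n * z n := by
    rw [ha, Finset.sum_mul, ← Finset.sum_sub_distrib]
    apply Finset.sum_congr rfl
    intro n hn
    simp only [Finset.mem_Icc] at hn
    rw [abs_of_nonpos (by linarith [hmono n m hn.1 hn.2 hmL] : z n - z m ≤ 0)]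
    ring
  have haa : a L - a m = ∑ n ∈ Finset.Ioc m L, v n := by
    rw [ha, ha, hIcc L, hIcc m, ← Finset.sum_Ioc_consecutive _ (Nat.zero_le m) hmL]
    ring
  have h2 : ∑ n ∈ Finset.Ioc m L, v n * |z n - z m|
      = ∑ n ∈ Finset.Ioc m L, v n * z n - (a L - a m) * z m := by
    rw [haa, Finset.sum_mul, ← Finset.sum_sub_distrib]
    apply Finset.sum_congr rfl
    intro n hn
    simp only [Finset.mem_Ioc] at hn
    rw [abs_of_nonneg (by linarith [hmono m n hm1 (le_of_lt hn.1) hn.2] : 0 ≤ z n - z m)]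
    ring
  have h3 : ∑ n ∈ Finset.Ioc m L, v n * z n
      = ∑ n ∈ Finset.Icc 1 L, v n * z n - ∑ n ∈ Finset.Icc 1 m, v n * z n := by
    rw [hsplit (fun n => v n * z n)]; ring
  rw [hsplit (fun n => v n * |z n - z m|), h1, h2, h3, habel m hm1, habel L hL]
  ring
end
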